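/- arXiv:2209.00248 — 5 statements merged into one kernel-verified Lean document; each statement's English description precedes it below -/
import Mathlib

section
/- Let c > 0, 0 < δ < 1 and M ≥ 1, and let χ : ℝ → ℝ satisfy χ(t) = c·t for every t ≥ −δ, with χ|_{(−∞,0]} ∈ 𝒲⁺_M. Set χ_ε := χ ∗ g_ε. Then: (a) for every 0 < ε < δ²/2, the restriction of χ_ε to (−∞,0] belongs to 𝒲⁺_{M/(1−δ)}; in particular χ_ε is concave, non-decreasing, non-positive on (−∞,0], χ_ε(0) = 0, and χ_ε'(t) ≤ (M/(1−δ))·χ_ε(t)/t for every t < 0; (b) for every 0 < ε < δ²/8, the function χ̄_ε(t) := χ_ε(t+ε) − c·ε satisfies: χ̄_ε|_{(−∞,0]} ∈ 𝒲⁺_{M/(1−δ)²}, χ̄_ε ≥ χ − c·ε on ℝ, and χ̄_ε converges to χ uniformly on compact subsets of ℝ as ε → 0⁺. -/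
open MeasureTheory Filter Set

/-- Membership in the class `𝒲⁺_M`: concave, non-decreasing, non-positive, vanishing at `0`,
not identically `0` on `(−∞,0]`, with `|t·χ'(t)| ≤ M·|χ(t)|` at every `t < 0`
at which `χ` is differentiable. -/
def WplusM (M : ℝ) (χ : ℝ → ℝ) : Prop :=
  ConcaveOn ℝ (Set.Iic 0) χ ∧ MonotoneOn χ (Set.Iic 0) ∧ (∀ t ≤ (0 : ℝ), χ t ≤ 0) ∧
    χ 0 = 0 ∧ (∃ t ≤ (0 : ℝ), χ t ≠ 0) ∧
    ∀ t < (0 : ℝ), ∀ d : ℝ, HasDerivAt χ d t → |t * d| ≤ M * |χ t|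

open Topology

set_option maxHeartbeats 2000000

private lemma slope_left_le {f : ℝ → ℝ} (hf : ConcaveOn ℝ univ f) {r y w : ℝ}
    (h1 : r < y) (h2 : y < w) : (f w - f r) / (w - r) ≤ (f y - f r) / (y - r) := by
  have h := hf.slope_anti_adjacent (mem_univ r) (mem_univ w) h1 h2
  have h1' : (0:ℝ) < y - r := by linarith
  have h2' : (0:ℝ) < w - y := by linarith
  have h3' : (0:ℝ) < w - r := by linarith
  rw [div_le_div_iff₀ h3' h1']
  rw [div_le_div_iff₀ h2' h1'] at h
  nlinarith

private lemma slope_right_ge {f : ℝ → ℝ} (hf : ConcaveOn ℝ univ f) {w y t : ℝ}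
    (h1 : w < y) (h2 : y < t) : (f t - f y) / (t - y) ≤ (f t - f w) / (t - w) := by
  have h := hf.slope_anti_adjacent (mem_univ w) (mem_univ t) h1 h2
  have h1' : (0:ℝ) < y - w := by linarith
  have h2' : (0:ℝ) < t - y := by linarith
  have h3' : (0:ℝ) < t - w := by linarith
  rw [div_le_div_iff₀ h2' h3']
  rw [div_le_div_iff₀ h2' h1'] at h
  nlinarith

private lemma concave_deriv_ge_slope {f : ℝ → ℝ} (hf : ConcaveOn ℝ univ f) {r w d : ℝ}
    (hrw : r < w) (hd : HasDerivAt f d r) : (f w - f r) / (w - r) ≤ d := by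
  have ht : Tendsto (slope f r) (𝓝[>] r) (𝓝 d) :=
    (hasDerivAt_iff_tendsto_slope.1 hd).mono_left
      (nhdsWithin_mono _ (fun y hy => ne_of_gt hy))
  refine ge_of_tendsto ht ?_
  filter_upwards [Ioo_mem_nhdsGT_of_mem ⟨le_refl r, hrw⟩] with y hy
  rw [slope_def_field]
  exact slope_left_le hf hy.1 hy.2

private lemma concave_deriv_le_slope {f : ℝ → ℝ} (hf : ConcaveOn ℝ univ f) {w t d : ℝ}
    (hwt : w < t) (hd : HasDerivAt f d t) : d ≤ (f t - f w) / (t - w) := by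
  have ht : Tendsto (slope f t) (𝓝[<] t) (𝓝 d) :=
    (hasDerivAt_iff_tendsto_slope.1 hd).mono_left
      (nhdsWithin_mono _ (fun y hy => ne_of_lt hy))
  refine le_of_tendsto ht ?_
  filter_upwards [Ioo_mem_nhdsLT_of_mem ⟨hwt, le_refl t⟩] with y hy
  rw [slope_def_field]
  have : (f y - f t) / (y - t) = (f t - f y) / (t - y) := by
    rw [← neg_sub (f t) (f y), ← neg_sub t y, neg_div_neg_eq]
  rw [this]
  exact slope_right_ge hf hy.1 hy.2

section Chi
variable {c δ : ℝ} {χ : ℝ → ℝ}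

private lemma chi_le (hc : 0 < c) (hδ0 : 0 < δ)
    (hcc : ConcaveOn ℝ (Iic 0) χ) (h0 : χ 0 = 0)
    (hlin : ∀ t : ℝ, -δ ≤ t → χ t = c * t) : ∀ x : ℝ, χ x ≤ c * x := by
  intro x
  rcases le_or_gt (-δ) x with hx | hx
  · exact (hlin x hx).le
  · have hx0 : x < 0 := by linarith
    have hxpos : 0 < -x := by linarith
    set a : ℝ := δ / (-x) with ha
    have ha0 : 0 < a := div_pos hδ0 hxpos
    have ha1 : a < 1 := by rw [ha, div_lt_one hxpos]; linarith
    have h2 := hcc.2 (show x ∈ Iic (0:ℝ) from hx0.le) (le_refl (0:ℝ))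
      ha0.le (by linarith : (0:ℝ) ≤ 1 - a) (by ring)
    simp only [smul_eq_mul, mul_zero, add_zero, h0] at h2
    have hax : a * x = -δ := by rw [ha]; field_simp; rw [div_self hx0.ne]
    rw [hax, hlin (-δ) (le_refl _)] at h2
    have he : a * (c * x) = c * -δ := by rw [ha]; field_simp; ring_nf; rw [mul_inv_cancel₀ hx0.ne]
    have h3 : a * χ x ≤ a * (c * x) := by rw [he]; exact h2
    exact le_of_mul_le_mul_left h3 ha0

private lemma chi_mono (hc : 0 < c) (hδ0 : 0 < δ)
    (hmono : MonotoneOn χ (Iic 0)) (h0 : χ 0 = 0)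
    (hlin : ∀ t : ℝ, -δ ≤ t → χ t = c * t) : Monotone χ := by
  intro x y hxy
  rcases le_or_gt y 0 with hy | hy
  · exact hmono (mem_Iic.mpr (hxy.trans hy)) (mem_Iic.mpr hy) hxy
  · rcases le_or_gt x 0 with hx0 | hx0
    · calc χ x ≤ χ 0 := hmono (mem_Iic.mpr hx0) (mem_Iic.mpr le_rfl) hx0
        _ = 0 := h0
        _ ≤ c * y := by positivity
        _ = χ y := (hlin y (by linarith)).symm
    · rw [hlin x (by linarith), hlin y (by linarith)]
      nlinarith

private lemma chi_concave (hc : 0 < c) (hδ0 : 0 < δ)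
    (hcc : ConcaveOn ℝ (Iic 0) χ) (h0 : χ 0 = 0)
    (hlin : ∀ t : ℝ, -δ ≤ t → χ t = c * t) : ConcaveOn ℝ univ χ := by
  have hle := chi_le hc hδ0 hcc h0 hlin
  apply concaveOn_of_slope_anti_adjacent convex_univ
  intro x y z _ _ hxy hyz
  rcases le_or_gt z 0 with hz | hz
  · exact hcc.slope_anti_adjacent (mem_Iic.mpr (by linarith)) (mem_Iic.mpr hz) hxy hyz
  rcases le_or_gt (-δ) x with hx | hx
  · have e1 : (χ z - χ y)/(z - y) = c := by
      rw [hlin z (by linarith), hlin y (by linarith), ← mul_sub, mul_div_assoc,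
        div_self (by linarith : z - y ≠ 0), mul_one]
    have e2 : (χ y - χ x)/(y - x) = c := by
      rw [hlin y (by linarith), hlin x hx, ← mul_sub, mul_div_assoc,
        div_self (by linarith : y - x ≠ 0), mul_one]
    rw [e1, e2]
  · rcases lt_trichotomy y 0 with hy | hy | hy
    · have h1 : (χ z - χ y)/(z - y) ≤ (0 - χ y)/(0 - y) := by
        rw [hlin z (by linarith)]
        rw [div_le_div_iff₀ (by linarith) (by linarith)]
        have := hle y
        nlinarith
      have h2 : (0 - χ y)/(0 - y) ≤ (χ y - χ x)/(y - x) := by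
        have h := hcc.slope_anti_adjacent (mem_Iic.mpr (by linarith : x ≤ (0:ℝ)))
          (le_refl (0:ℝ)) hxy hy
        rw [h0] at h
        exact h
      linarith
    · subst hy
      rw [h0, hlin z (by linarith)]
      have e1 : (c * z - 0)/(z - 0) = c := by
        rw [sub_zero, sub_zero, mul_div_assoc, div_self (by linarith : z ≠ 0), mul_one]
      rw [e1]
      rw [le_div_iff₀ (by linarith : (0:ℝ) < 0 - x)]
      have := hle x
      nlinarith
    · have e1 : (χ z - χ y)/(z - y) = c := by
        rw [hlin z (by linarith), hlin y (by linarith), ← mul_sub, mul_div_assoc,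
          div_self (by linarith : z - y ≠ 0), mul_one]
      rw [e1, hlin y (by linarith), le_div_iff₀ (by linarith : (0:ℝ) < y - x)]
      have := hle x
      nlinarith

private lemma chi_cont (hc : 0 < c) (hδ0 : 0 < δ)
    (hcc : ConcaveOn ℝ (Iic 0) χ) (h0 : χ 0 = 0)
    (hlin : ∀ t : ℝ, -δ ≤ t → χ t = c * t) : Continuous χ := by
  have h := (chi_concave hc hδ0 hcc h0 hlin).continuousOn isOpen_univ
  rw [← continuousOn_univ]
  exact h
end Chi

section ChiSlope
variable {c δ M : ℝ} {χ : ℝ → ℝ}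

private lemma chi_slope_bound (hc : 0 < c) (hδ0 : 0 < δ)
    (hcc : ConcaveOn ℝ (Iic 0) χ) (hmono : MonotoneOn χ (Iic 0))
    (hnonpos : ∀ t ≤ (0:ℝ), χ t ≤ 0) (h0 : χ 0 = 0)
    (hder : ∀ t < (0:ℝ), ∀ d : ℝ, HasDerivAt χ d t → |t * d| ≤ M * |χ t|)
    (hlin : ∀ t : ℝ, -δ ≤ t → χ t = c * t) :
    ∀ u v : ℝ, u < v → v < 0 → (χ v - χ u) / (v - u) ≤ M * (-χ u) / (-u) := by
  intro u v huv hv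
  have hu : u < 0 := huv.trans hv
  have hconc := chi_concave hc hδ0 hcc h0 hlin
  have hcont := chi_cont hc hδ0 hcc h0 hlin
  have hmonoR := chi_mono hc hδ0 hmono h0 hlin
  have hpt : ∀ a : ℝ, a < u → ∃ r, r ∈ Ioo a u ∧ DifferentiableAt ℝ χ r := by
    intro a ha
    by_contra h
    push_neg at h
    have hsub : Ioo a u ⊆ {x | ¬ DifferentiableAt ℝ χ x} := fun r hr => h r hr
    have h0' : volume (Ioo a u) = 0 :=
      measure_mono_null hsub (by simpa [ae_iff] using hmonoR.ae_differentiableAt)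
    rw [Real.volume_Ioo, ENNReal.ofReal_eq_zero] at h0'
    linarith
  have hpts : ∀ n : ℕ, ∃ r, r ∈ Ioo (u - 1/(n+1)) u ∧ DifferentiableAt ℝ χ r :=
    fun n => hpt _ (sub_lt_self u (by positivity))
  choose r hr hdiff using hpts
  have key : ∀ n, (χ v - χ u)/(v - u) ≤ M * (-χ (r n)) / (-(r n)) := by
    intro n
    have hru : r n < u := (hr n).2
    have hr0 : r n < 0 := hru.trans hu
    have hd := (hdiff n).hasDerivAt
    set d := deriv χ (r n) with hdd
    have h1 : (χ v - χ u)/(v - u) ≤ (χ u - χ (r n))/(u - r n) :=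
      hconc.slope_anti_adjacent (mem_univ _) (mem_univ _) hru huv
    have h2 : (χ u - χ (r n))/(u - r n) ≤ d := concave_deriv_ge_slope hconc hru hd
    have h3 := hder (r n) hr0 d hd
    have hχr : χ (r n) ≤ 0 := hnonpos _ hr0.le
    have h4 : d ≤ M * (-χ (r n)) / (-(r n)) := by
      rw [abs_mul, abs_of_neg hr0, abs_of_nonpos hχr] at h3
      rw [le_div_iff₀ (by linarith : (0:ℝ) < -(r n))]
      calc d * -(r n) ≤ |d| * -(r n) := by nlinarith [le_abs_self d, neg_pos.mpr hr0]
        _ = -(r n) * |d| := mul_comm _ _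
        _ ≤ M * -χ (r n) := h3
    linarith
  have hrlim : Tendsto r atTop (𝓝 u) := by
    have h1 : Tendsto (fun n : ℕ => u - 1/(n+1)) atTop (𝓝 u) := by
      simpa using (tendsto_const_nhds (x := u)).sub tendsto_one_div_add_atTop_nhds_zero_nat
    exact tendsto_of_tendsto_of_tendsto_of_le_of_le h1 tendsto_const_nhds
      (fun n => (hr n).1.le) (fun n => (hr n).2.le)
  have hlim : Tendsto (fun n => M * (-χ (r n)) / (-(r n))) atTop (𝓝 (M * (-χ u) / (-u))) := by
    have h1 : Tendsto (fun n => χ (r n)) atTop (𝓝 (χ u)) :=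
      (hcont.continuousAt).tendsto.comp hrlim
    exact (h1.neg.const_mul M).div hrlim.neg (by linarith : -u ≠ 0)
  exact ge_of_tendsto hlim (Eventually.of_forall key)
end ChiSlope

section Moll
variable {g : ℝ → ℝ} {ε : ℝ}

private lemma g_zero (hg_supp : Function.support g ⊆ Icc (-1) 1) (hε : 0 < ε)
    {x : ℝ} (hx : x ∉ Icc (-ε) ε) : g (x / ε) = 0 := by
  by_contra h
  have hm := hg_supp h
  apply hx
  constructor
  · have h1 : (-1:ℝ) * ε ≤ x := (le_div_iff₀ hε).mp hm.1
    linarith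
  · exact (div_le_one hε).mp hm.2

private lemma moll_integrable (hgc : Continuous g)
    (hg_supp : Function.support g ⊆ Icc (-1) 1) (hε : 0 < ε)
    {f : ℝ → ℝ} (hf : Continuous f) :
    Integrable (fun s => f s * (ε⁻¹ * g (s / ε))) := by
  apply Continuous.integrable_of_hasCompactSupport
  · exact hf.mul (continuous_const.mul (hgc.comp (continuous_id.div_const ε)))
  · apply HasCompactSupport.intro (isCompact_Icc (a := -ε) (b := ε))
    intro x hx
    rw [g_zero hg_supp hε hx, mul_zero, mul_zero]

private lemma moll_one (hε : 0 < ε) (hg_int : (∫ t, g t) = 1) :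
    (∫ s, ε⁻¹ * g (s / ε)) = 1 := by
  rw [integral_const_mul, MeasureTheory.Measure.integral_comp_div g ε, smul_eq_mul, hg_int,
    abs_of_pos hε]
  field_simp

private lemma moll_odd (hg_even : ∀ t, g t = g (-t)) :
    (∫ s : ℝ, s * (ε⁻¹ * g (s / ε))) = 0 := by
  have h1 := integral_neg_eq_self (fun s : ℝ => s * (ε⁻¹ * g (s / ε))) volume
  have h2 : (∫ s : ℝ, (-s) * (ε⁻¹ * g ((-s) / ε))) = ∫ s : ℝ, -(s * (ε⁻¹ * g (s / ε))) := by
    congr 1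
    funext s
    rw [neg_div, ← hg_even]
    ring
  rw [h2, integral_neg] at h1
  linarith

end Moll

/-- Part (ii) of Lemma 2.2: regularization of a concave weight `χ ∈ 𝒲⁺_M` which is linear
(`χ(t) = c·t`) on `[-δ, ∞)`, by convolution with the mollifiers `g_ε(t) = ε⁻¹ g(t/ε)`. -/
theorem smoothing_of_concave_weight
    (c δ M : ℝ) (hc : 0 < c) (hδ0 : 0 < δ) (hδ1 : δ < 1) (hM : 1 ≤ M)
    (χ : ℝ → ℝ) (hlin : ∀ t : ℝ, -δ ≤ t → χ t = c * t)
    (hχ : WplusM M χ)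
    (g : ℝ → ℝ) (hg_smooth : ContDiff ℝ (⊤ : ℕ∞) g) (hg_even : ∀ t, g t = g (-t))
    (hg_nonneg : ∀ t, 0 ≤ g t) (hg_le_one : ∀ t, g t ≤ 1)
    (hg_supp : Function.support g ⊆ Set.Icc (-1) 1)
    (hg_int : (∫ t, g t) = 1) :
    ∀ χe : ℝ → ℝ → ℝ,
      χe = (fun ε t => ∫ s, χ (t - s) * (ε⁻¹ * g (s / ε))) →
      -- (a): for every 0 < ε < δ²/2, `χ_ε` restricted to (−∞,0] belongs to 𝒲⁺_{M/(1−δ)};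
      --      in particular χ_ε'(t) ≤ (M/(1−δ))·χ_ε(t)/t for every t < 0.
      (∀ ε, 0 < ε → ε < δ ^ 2 / 2 →
        WplusM (M / (1 - δ)) (χe ε) ∧
          ∀ t < (0 : ℝ), ∀ d : ℝ, HasDerivAt (χe ε) d t →
            d ≤ (M / (1 - δ)) * (χe ε t / t)) ∧
      -- (b): for every 0 < ε < δ²/8, `χ̄_ε(t) := χ_ε(t+ε) − c·ε` belongs to 𝒲⁺_{M/(1−δ)²},
      --      satisfies χ̄_ε ≥ χ − c·ε on ℝ, and χ̄_ε → χ uniformly on compact subsets of ℝ.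
      (∀ ε, 0 < ε → ε < δ ^ 2 / 8 →
        WplusM (M / (1 - δ) ^ 2) (fun t => χe ε (t + ε) - c * ε) ∧
          ∀ t : ℝ, χ t - c * ε ≤ χe ε (t + ε) - c * ε) ∧
      (∀ K : Set ℝ, IsCompact K →
        TendstoUniformlyOn (fun ε t => χe ε (t + ε) - c * ε) χ
          (nhdsWithin 0 (Set.Ioi 0)) K) := by
  intro χe hχe
  obtain ⟨hcc, hmono, hnonpos, h0, hne, hder⟩ := hχ
  have hgc : Continuous g := hg_smooth.continuous
  have h1δ : 0 < 1 - δ := by linarith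
  have hle := chi_le hc hδ0 hcc h0 hlin
  have hconc := chi_concave hc hδ0 hcc h0 hlin
  have hcont := chi_cont hc hδ0 hcc h0 hlin
  have hmonoR := chi_mono hc hδ0 hmono h0 hlin
  have hKL := chi_slope_bound hc hδ0 hcc hmono hnonpos h0 hder hlin
  have hχeq : ∀ ε t, χe ε t = ∫ s, χ (t - s) * (ε⁻¹ * g (s / ε)) := by
    intro ε t; rw [hχe]
  have hInt : ∀ ε : ℝ, 0 < ε → ∀ f : ℝ → ℝ, Continuous f →
      Integrable (fun s => f s * (ε⁻¹ * g (s / ε))) := fun ε hε f hf =>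
    moll_integrable hgc hg_supp hε hf
  have hgnn : ∀ ε : ℝ, 0 < ε → ∀ s : ℝ, 0 ≤ ε⁻¹ * g (s / ε) := fun ε hε s =>
    mul_nonneg (by positivity) (hg_nonneg _)
  have hone : ∀ ε : ℝ, 0 < ε → (∫ s, ε⁻¹ * g (s / ε)) = 1 := fun ε hε =>
    moll_one hε hg_int
  have hcχs : ∀ x : ℝ, Continuous fun s : ℝ => χ (x - s) := fun x =>
    hcont.comp (continuous_const.sub continuous_id)
  -- χe is linear on [-δ+ε, ∞)
  have hlinχe : ∀ ε : ℝ, 0 < ε → ∀ t : ℝ, -δ + ε ≤ t → χe ε t = c * t := by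
    intro ε hε t ht
    rw [hχeq]
    have heq : (fun s => χ (t - s) * (ε⁻¹ * g (s / ε)))
        = fun s => (c * t) * (ε⁻¹ * g (s / ε)) - c * (s * (ε⁻¹ * g (s / ε))) := by
      funext s
      rcases em (s ∈ Icc (-ε) ε) with hs | hs
      · obtain ⟨h1, h2⟩ := hs
        rw [hlin (t - s) (by linarith)]
        ring
      · rw [g_zero hg_supp hε hs]
        ring
    rw [heq, integral_sub (hInt ε hε (fun _ => c * t) continuous_const)
      ((hInt ε hε (fun s : ℝ => s) continuous_id').const_mul c), integral_const_mul (c * t), integral_const_mul c,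
      hone ε hε, moll_odd hg_even, mul_one, mul_zero, sub_zero]
  have hχe0 : ∀ ε : ℝ, 0 < ε → ε < δ → χe ε 0 = 0 := by
    intro ε hε hεδ
    rw [hlinχe ε hε 0 (by linarith), mul_zero]
  have hmonoχe : ∀ ε : ℝ, 0 < ε → Monotone (χe ε) := by
    intro ε hε x y hxy
    rw [hχeq, hχeq]
    apply integral_mono (hInt ε hε _ (hcχs x)) (hInt ε hε _ (hcχs y))
    intro s
    exact mul_le_mul_of_nonneg_right (hmonoR (by linarith : x - s ≤ y - s)) (hgnn ε hε s)
  have hconcχe : ∀ ε : ℝ, 0 < ε → ConcaveOn ℝ univ (χe ε) := by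
    intro ε hε
    refine ⟨convex_univ, ?_⟩
    intro x _ y _ a b ha hb hab
    simp only [smul_eq_mul, hχeq]
    rw [← integral_const_mul a, ← integral_const_mul b,
      ← integral_add ((hInt ε hε _ (hcχs x)).const_mul a) ((hInt ε hε _ (hcχs y)).const_mul b)]
    apply integral_mono
      (((hInt ε hε _ (hcχs x)).const_mul a).add ((hInt ε hε _ (hcχs y)).const_mul b))
      (hInt ε hε _ (hcχs (a * x + b * y)))
    intro s
    have h2 := hconc.2 (mem_univ (x - s)) (mem_univ (y - s)) ha hb hab
    simp only [smul_eq_mul] at h2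
    have e3 : a * (x - s) + b * (y - s) = a * x + b * y - s := by linear_combination (-s) * hab
    rw [e3] at h2
    calc a * (χ (x - s) * (ε⁻¹ * g (s / ε))) + b * (χ (y - s) * (ε⁻¹ * g (s / ε)))
        = (a * χ (x - s) + b * χ (y - s)) * (ε⁻¹ * g (s / ε)) := by ring
      _ ≤ χ (a * x + b * y - s) * (ε⁻¹ * g (s / ε)) :=
        mul_le_mul_of_nonneg_right h2 (hgnn ε hε s)
  -- the key derivative bound for part (a)
  have hkey : ∀ ε : ℝ, 0 < ε → ε < δ ^ 2 / 2 → ∀ t : ℝ, t < 0 → ∀ d : ℝ,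
      HasDerivAt (χe ε) d t →
      χe ε t / t ≤ d ∧ d ≤ M / (1 - δ) * (χe ε t / t) := by
    intro ε hε hε2 t ht d hd
    have hεδ : 2 * ε < δ := by nlinarith
    have hχet : χe ε t ≤ 0 := by
      have h := hmonoχe ε hε ht.le
      rwa [hχe0 ε hε (by linarith)] at h
    have hlow : χe ε t / t ≤ d := by
      have h := concave_deriv_ge_slope (hconcχe ε hε) ht hd
      rw [hχe0 ε hε (by linarith)] at h
      have e : (0 - χe ε t) / (0 - t) = χe ε t / t := by
        rw [zero_sub, zero_sub, neg_div_neg_eq]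
      rwa [e] at h
    refine ⟨hlow, ?_⟩
    rcases lt_or_ge (-δ + ε) t with htε | htε
    · have heq : χe ε =ᶠ[𝓝 t] fun x => c * x := by
        filter_upwards [Ioi_mem_nhds htε] with x hx
        exact hlinχe ε hε x (le_of_lt hx)
      have hdc : HasDerivAt (χe ε) c t := by
        have h1 : HasDerivAt (fun x : ℝ => c * x) c t := by
          simpa using (hasDerivAt_id t).const_mul c
        exact h1.congr_of_eventuallyEq heq
      have hdceq : d = c := hd.unique hdc
      rw [hdceq, hlinχe ε hε t (le_of_lt htε), mul_div_assoc, div_self ht.ne, mul_one]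
      rw [div_mul_eq_mul_div, le_div_iff₀ h1δ]
      nlinarith
    · have htneg : 0 < -t - ε := by linarith
      have hbound : ∀ w : ℝ, w < t → d ≤ M * (-χe ε w) / (-t - ε) := by
        intro w hw
        have hs1 : d ≤ (χe ε t - χe ε w) / (t - w) :=
          concave_deriv_le_slope (hconcχe ε hε) hw hd
        have h5 : (∫ s, (-χ (w - s)) * (ε⁻¹ * g (s / ε))) = -(χe ε w) := by
          rw [hχeq, ← integral_neg]
          congr 1
          funext s
          ring
        have hs2 : (χe ε t - χe ε w) / (t - w) ≤ M * (-χe ε w) / (-t - ε) := by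
          rw [div_le_iff₀ (by linarith : (0:ℝ) < t - w)]
          have hIrhs : Integrable (fun s => (M / (-t - ε) * (t - w)) *
              ((-χ (w - s)) * (ε⁻¹ * g (s / ε)))) :=
            (hInt ε hε _ (hcχs w).neg).const_mul _
          calc χe ε t - χe ε w
              = ∫ s, (χ (t - s) * (ε⁻¹ * g (s / ε)) - χ (w - s) * (ε⁻¹ * g (s / ε))) := by
                rw [hχeq, hχeq]
                exact (integral_sub (hInt ε hε _ (hcχs t)) (hInt ε hε _ (hcχs w))).symm
            _ ≤ ∫ s, (M / (-t - ε) * (t - w)) * ((-χ (w - s)) * (ε⁻¹ * g (s / ε))) := by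
                apply integral_mono
                  ((hInt ε hε _ (hcχs t)).sub (hInt ε hε _ (hcχs w))) hIrhs
                intro s
                simp only [Pi.sub_apply]
                rcases em (s ∈ Icc (-ε) ε) with hs | hs
                · obtain ⟨hs1', hs2'⟩ := hs
                  have hts : t - s < 0 := by linarith
                  have hws : w - s < t - s := by linarith
                  have hkl := hKL (w - s) (t - s) hws hts
                  have e1 : t - s - (w - s) = t - w := by ring
                  rw [e1] at hkl
                  have hχws : χ (w - s) ≤ 0 := hnonpos _ (by linarith)
                  have h6 : M * (-χ (w - s)) / (-(w - s)) ≤ M * (-χ (w - s)) / (-t - ε) := by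
                    rw [div_le_div_iff₀ (by linarith) htneg]
                    nlinarith [mul_nonneg (mul_nonneg (by linarith : (0:ℝ) ≤ M)
                      (by linarith : (0:ℝ) ≤ -χ (w - s)))
                      (by linarith : (0:ℝ) ≤ -(w - s) - (-t - ε))]
                  have h7 : χ (t - s) - χ (w - s) ≤ (M * (-χ (w - s)) / (-t - ε)) * (t - w) := by
                    rw [div_le_iff₀ (by linarith : (0:ℝ) < t - w)] at hkl
                    nlinarith
                  have h8 := mul_le_mul_of_nonneg_right h7 (hgnn ε hε s)
                  calc χ (t - s) * (ε⁻¹ * g (s / ε)) - χ (w - s) * (ε⁻¹ * g (s / ε))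
                      = (χ (t - s) - χ (w - s)) * (ε⁻¹ * g (s / ε)) := by ring
                    _ ≤ (M * (-χ (w - s)) / (-t - ε) * (t - w)) * (ε⁻¹ * g (s / ε)) := h8
                    _ = (M / (-t - ε) * (t - w)) * ((-χ (w - s)) * (ε⁻¹ * g (s / ε))) := by ring
                · rw [g_zero hg_supp hε hs]
                  simp
            _ = (M / (-t - ε) * (t - w)) * ∫ s, (-χ (w - s)) * (ε⁻¹ * g (s / ε)) :=
                integral_const_mul _ _
            _ = M * (-χe ε w) / (-t - ε) * (t - w) := by rw [h5]; ring
        linarith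
      have hcχe : ContinuousAt (χe ε) t := hd.continuousAt
      have hlimit : Tendsto (fun w => M * (-χe ε w) / (-t - ε)) (𝓝[<] t)
          (𝓝 (M * (-χe ε t) / (-t - ε))) := by
        have h1 : Tendsto (χe ε) (𝓝[<] t) (𝓝 (χe ε t)) :=
          hcχe.tendsto.mono_left nhdsWithin_le_nhds
        exact (h1.neg.const_mul M).div_const _
      have hfin : d ≤ M * (-χe ε t) / (-t - ε) := by
        refine ge_of_tendsto hlimit ?_
        filter_upwards [self_mem_nhdsWithin] with w hw
        exact hbound w hw
      have harith : M * (-χe ε t) / (-t - ε) ≤ M / (1 - δ) * (χe ε t / t) := by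
        have hA : 0 ≤ -χe ε t := by linarith
        have hδt : ε ≤ δ * (-t) := by nlinarith
        have e1 : χe ε t / t = -χe ε t / -t := (neg_div_neg_eq _ _).symm
        rw [e1, div_mul_div_comm, div_le_div_iff₀ htneg (by nlinarith)]
        nlinarith [mul_nonneg (by linarith : (0:ℝ) ≤ M) hA]
      linarith
  have parta : ∀ ε, 0 < ε → ε < δ ^ 2 / 2 →
      WplusM (M / (1 - δ)) (χe ε) ∧
        ∀ t < (0 : ℝ), ∀ d : ℝ, HasDerivAt (χe ε) d t →
          d ≤ (M / (1 - δ)) * (χe ε t / t) := by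
    intro ε hε hε2
    have hεδ : ε < δ := by nlinarith
    constructor
    · refine ⟨(hconcχe ε hε).subset (subset_univ _) (convex_Iic 0),
        (hmonoχe ε hε).monotoneOn _, ?_, hχe0 ε hε hεδ, ?_, ?_⟩
      · intro t htle
        have h := hmonoχe ε hε htle
        rwa [hχe0 ε hε hεδ] at h
      · refine ⟨-(δ / 2), by linarith, ?_⟩
        rw [hlinχe ε hε _ (by nlinarith)]
        intro h
        nlinarith
      · intro t ht d hd
        obtain ⟨hlow, hup⟩ := hkey ε hε hε2 t ht d hd
        have hχet : χe ε t ≤ 0 := by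
          have h := hmonoχe ε hε ht.le
          rwa [hχe0 ε hε hεδ] at h
        have hd0 : 0 ≤ d := by
          refine le_trans ?_ hlow
          rw [show χe ε t / t = -χe ε t / -t from (neg_div_neg_eq _ _).symm]
          exact div_nonneg (by linarith) (by linarith)
        have habs1 : |t * d| = -t * d := by
          rw [abs_of_nonpos (mul_nonpos_of_nonpos_of_nonneg ht.le hd0)]; ring
        have habs2 : |χe ε t| = -χe ε t := abs_of_nonpos hχet
        rw [habs1, habs2]
        have h9 := mul_le_mul_of_nonneg_left hup (by linarith : (0:ℝ) ≤ -t)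
        have e : -t * (M / (1 - δ) * (χe ε t / t)) = M / (1 - δ) * -χe ε t := by
          have htne : t ≠ 0 := ht.ne
          field_simp
        rw [e] at h9
        exact h9
    · intro t ht d hd
      exact (hkey ε hε hε2 t ht d hd).2
  refine ⟨parta, ?_, ?_⟩
  · -- part (b)
    intro ε hε hε8
    have hεδ : ε < δ := by nlinarith
    have hε2 : ε < δ ^ 2 / 2 := by nlinarith
    have hM2 : (1:ℝ) ≤ M / (1 - δ) ^ 2 := by
      rw [le_div_iff₀ (by positivity)]
      nlinarith
    constructor
    · refine ⟨?_, ?_, ?_, ?_, ?_, ?_⟩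
      · refine ⟨convex_Iic 0, ?_⟩
        intro x _ y _ a b ha hb hab
        have h := (hconcχe ε hε).2 (mem_univ (x + ε)) (mem_univ (y + ε)) ha hb hab
        simp only [smul_eq_mul] at h ⊢
        have e3 : a * (x + ε) + b * (y + ε) = a * x + b * y + ε := by
          linear_combination ε * hab
        rw [e3] at h
        have hab' : a * (c * ε) + b * (c * ε) = c * ε := by
          linear_combination (c * ε) * hab
        nlinarith
      · intro x _ y _ hxy
        have h := hmonoχe ε hε (by linarith : x + ε ≤ y + ε)
        simp only
        linarith
      · intro t htle
        have h := hmonoχe ε hε (by linarith : t + ε ≤ 0 + ε)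
        have h2 : χe ε (0 + ε) = c * ε := by
          rw [hlinχe ε hε _ (by linarith), zero_add]
        rw [h2] at h
        simp only
        linarith
      · simp only
        rw [hlinχe ε hε _ (by linarith : -δ + ε ≤ 0 + ε), zero_add, sub_self]
      · refine ⟨-(δ / 2), by linarith, ?_⟩
        simp only
        rw [hlinχe ε hε _ (by linarith : -δ + ε ≤ -(δ / 2) + ε)]
        intro h
        nlinarith
      · intro t ht d hd
        have h2 : HasDerivAt (χe ε) d (t + ε) := by
          have h1 : HasDerivAt (fun u : ℝ => χe ε (u + ε)) d t := by
            have := hd.add_const (c * ε)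
            simpa using this
          have h3 : HasDerivAt (fun u : ℝ => χe ε (u + ε)) d ((t + ε) + -ε) := by
            simpa using h1
          have h4 := HasDerivAt.comp_add_const (f := fun u : ℝ => χe ε (u + ε))
            (t + ε) (-ε) h3
          have e : (fun x : ℝ => χe ε (x + -ε + ε)) = χe ε := by
            funext x
            norm_num
          rwa [e] at h4
        rcases lt_or_ge (-δ) t with htδ | htδ
        · -- linear region
          have heq : χe ε =ᶠ[𝓝 (t + ε)] fun x => c * x := by
            filter_upwards [Ioi_mem_nhds (by linarith : -δ + ε < t + ε)] with x hx
            exact hlinχe ε hε x (le_of_lt hx)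
          have hdc : HasDerivAt (χe ε) c (t + ε) := by
            have h1 : HasDerivAt (fun x : ℝ => c * x) c (t + ε) := by
              simpa using (hasDerivAt_id (t + ε)).const_mul c
            exact h1.congr_of_eventuallyEq heq
          have hdceq : d = c := h2.unique hdc
          have e2 : χe ε (t + ε) - c * ε = c * t := by
            rw [hlinχe ε hε _ (by linarith : -δ + ε ≤ t + ε)]
            ring
          simp only
          rw [e2, hdceq]
          calc |t * c| = |c * t| := by rw [mul_comm]
            _ ≤ M / (1 - δ) ^ 2 * |c * t| := le_mul_of_one_le_left (abs_nonneg _) hM2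
        · -- u := t + ε ≤ -δ + ε < 0
          have hu : t + ε < 0 := by linarith
          obtain ⟨hlow, hup⟩ := hkey ε hε hε2 (t + ε) hu d h2
          have hχeu : χe ε (t + ε) ≤ 0 := by
            have h := hmonoχe ε hε hu.le
            rwa [hχe0 ε hε hεδ] at h
          have hd0 : 0 ≤ d := by
            refine le_trans ?_ hlow
            rw [show χe ε (t + ε) / (t + ε) = -χe ε (t + ε) / -(t + ε) from
              (neg_div_neg_eq _ _).symm]
            exact div_nonneg (by linarith) (by linarith)
          set A : ℝ := -χe ε (t + ε) with hA'
          set B : ℝ := -(t + ε) with hB'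
          have hA : 0 ≤ A := by simp [hA']; linarith
          have hB : 0 < B := by simp [hB']; linarith
          have hBδ : δ - ε ≤ B := by simp [hB']; linarith
          have hεB : ε ≤ δ * B := by nlinarith
          have hup' : d * ((1 - δ) * B) ≤ M * A := by
            have e : M / (1 - δ) * (χe ε (t + ε) / (t + ε)) = M * A / ((1 - δ) * B) := by
              rw [show χe ε (t + ε) / (t + ε) = A / B by
                rw [hA', hB', neg_div_neg_eq]]
              rw [div_mul_div_comm]
            rw [e] at hup
            exact (le_div_iff₀ (by positivity)).mp hup
          simp only
          have habs1 : |t * d| = (B + ε) * d := by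
            rw [abs_of_nonpos (mul_nonpos_of_nonpos_of_nonneg (by linarith : t ≤ 0) hd0)]
            rw [hB']; ring
          have habs2 : |χe ε (t + ε) - c * ε| = A + c * ε := by
            rw [abs_of_nonpos (by nlinarith : χe ε (t + ε) - c * ε ≤ 0), hA']
            ring
          rw [habs1, habs2]
          rw [div_mul_eq_mul_div, le_div_iff₀ (by positivity : (0:ℝ) < (1 - δ) ^ 2)]
          have k1 : (B + ε) * d * (1 - δ) ^ 2 ≤ (B + δ * B) * d * (1 - δ) ^ 2 := by
            nlinarith [mul_nonneg hd0 (sq_nonneg (1 - δ))]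
          have k2 : (B + δ * B) * d * (1 - δ) ^ 2 = (d * ((1 - δ) * B)) * ((1 + δ) * (1 - δ)) := by
            ring
          have k3 : (d * ((1 - δ) * B)) * ((1 + δ) * (1 - δ)) ≤ (M * A) * 1 := by
            apply mul_le_mul hup' (by nlinarith) (by nlinarith) (by positivity)
          have k4 : M * A ≤ M * (A + c * ε) := by
            nlinarith [mul_nonneg (by linarith : (0:ℝ) ≤ M) (by positivity : (0:ℝ) ≤ c * ε)]
          nlinarith
    · intro t
      have h1 : χ t ≤ χe ε (t + ε) := by
        rw [hχeq]
        have h2 : χ t = ∫ s, χ t * (ε⁻¹ * g (s / ε)) := by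
          rw [integral_const_mul, hone ε hε, mul_one]
        rw [h2]
        apply integral_mono (hInt ε hε _ continuous_const) (hInt ε hε _ (hcχs (t + ε)))
        intro s
        dsimp only
        rcases em (s ∈ Icc (-ε) ε) with hs | hs
        · exact mul_le_mul_of_nonneg_right (hmonoR (by obtain ⟨_, h⟩ := hs; linarith :
            t ≤ t + ε - s)) (hgnn ε hε s)
        · rw [g_zero hg_supp hε hs]
          simp
      linarith
  · -- uniform convergence
    intro K hK
    obtain ⟨R, hR⟩ := hK.isBounded.subset_closedBall 0
    set R' : ℝ := max R 0 with hR'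
    have hKJ : ∀ t ∈ K, |t| ≤ R' := by
      intro t htK
      have := hR htK
      rw [Metric.mem_closedBall, Real.dist_eq, sub_zero] at this
      exact le_trans this (le_max_left _ _)
    have hJc : IsCompact (Icc (-(R' + 1)) (R' + 1)) := isCompact_Icc
    have hUC := hJc.uniformContinuousOn_of_continuous hcont.continuousOn
    rw [Metric.tendstoUniformlyOn_iff]
    intro η hη
    rw [Metric.uniformContinuousOn_iff] at hUC
    obtain ⟨θ, hθ0, hθ⟩ := hUC (η / 4) (by linarith)
    have hr0 : 0 < min (min (θ / 2) (1 / 2)) (η / (4 * c)) := by positivity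
    filter_upwards [Ioo_mem_nhdsGT_of_mem ⟨le_refl (0:ℝ), hr0⟩] with ε hεm
    obtain ⟨hε0, hεr⟩ := hεm
    have hεθ : 2 * ε < θ := by
      have := lt_of_lt_of_le hεr (le_trans (min_le_left _ _) (min_le_left _ _))
      linarith
    have hε1 : 2 * ε ≤ 1 := by
      have := lt_of_lt_of_le hεr (le_trans (min_le_left _ _) (min_le_right _ _))
      linarith
    have hεη : c * ε < η / 4 := by
      have h := lt_of_lt_of_le hεr (min_le_right _ _)
      rw [lt_div_iff₀ (by positivity : (0:ℝ) < 4 * c)] at h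
      nlinarith
    intro t htK
    have htR := hKJ t htK
    rw [abs_le] at htR
    obtain ⟨htR1, htR2⟩ := htR
    have htJ : t ∈ Icc (-(R' + 1)) (R' + 1) := by
      constructor <;> [linarith; linarith]
    have hbnd : |χe ε (t + ε) - χ t| ≤ η / 4 := by
      have he : χe ε (t + ε) - χ t = ∫ s, (χ (t + ε - s) - χ t) * (ε⁻¹ * g (s / ε)) := by
        have heq : (fun s => (χ (t + ε - s) - χ t) * (ε⁻¹ * g (s / ε)))
            = fun s => χ (t + ε - s) * (ε⁻¹ * g (s / ε)) - χ t * (ε⁻¹ * g (s / ε)) := by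
          funext s; ring
        rw [heq, integral_sub (hInt ε hε0 _ (hcχs (t + ε))) (hInt ε hε0 _ continuous_const),
          integral_const_mul, hone ε hε0, mul_one, hχeq]
      rw [he]
      have hnb : ‖∫ s, (χ (t + ε - s) - χ t) * (ε⁻¹ * g (s / ε))‖
          ≤ ∫ s, (η / 4) * (ε⁻¹ * g (s / ε)) := by
        apply norm_integral_le_of_norm_le (hInt ε hε0 _ continuous_const)
        apply Eventually.of_forall
        intro s
        rcases em (s ∈ Icc (-ε) ε) with hs | hs
        · rw [Real.norm_eq_abs, abs_mul, abs_of_nonneg (hgnn ε hε0 s)]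
          apply mul_le_mul_of_nonneg_right _ (hgnn ε hε0 s)
          obtain ⟨hs1, hs2⟩ := hs
          have harg : t + ε - s ∈ Icc (-(R' + 1)) (R' + 1) := by
            constructor <;> [linarith; linarith]
          have hdst : dist (t + ε - s) t < θ := by
            rw [Real.dist_eq]
            rw [abs_lt]
            constructor <;> [linarith; linarith]
          have := hθ _ harg _ htJ hdst
          rw [Real.dist_eq] at this
          exact this.le
        · rw [g_zero hg_supp hε0 hs]
          simp
      rw [Real.norm_eq_abs] at hnb
      calc |∫ s, (χ (t + ε - s) - χ t) * (ε⁻¹ * g (s / ε))|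
          ≤ ∫ s, (η / 4) * (ε⁻¹ * g (s / ε)) := hnb
        _ = η / 4 := by rw [integral_const_mul, hone ε hε0, mul_one]
    rw [Real.dist_eq]
    have htri : |χ t - (χe ε (t + ε) - c * ε)| ≤ |χe ε (t + ε) - χ t| + c * ε := by
      have e : χ t - (χe ε (t + ε) - c * ε) = -(χe ε (t + ε) - χ t) + c * ε := by ring
      rw [e]
      calc |-(χe ε (t + ε) - χ t) + c * ε| ≤ |-(χe ε (t + ε) - χ t)| + |c * ε| := abs_add_le _ _
        _ = |χe ε (t + ε) - χ t| + c * ε := by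
          rw [abs_neg, abs_of_nonneg (by positivity : (0:ℝ) ≤ c * ε)]
    linarith
end

section
/- Let M ≥ 1 and let χ, χ̃ ∈ 𝒲̃⁻ ∪ 𝒲⁺_M with χ̃ ≤ χ and χ̃(−1) < 0. If χ ∈ 𝒲̃⁻ then Q₀(1) > 0, where Q₀(ε) := sup_{s ≤ −1} χ(ε·s)/χ̃(s). Define Q : (0,∞) → (0,∞) by Q(t) := 1 for t ≥ 1, and for 0 < t < 1: Q(t) := (Q₀(t)/Q₀(1))^{1/2} if χ ∈ 𝒲̃⁻, and Q(t) := t^{1/2} if χ ∈ 𝒲⁺_M. Then in either case the function h(t) := Q(t)²/t is non-increasing on (0, ∞). -/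
/-!
Convexity of `χ` together with `χ 0 = 0` makes `ε ↦ χ (ε s) / ε` non-decreasing on `(0, ∞)` for
every `s ≤ 0`; dividing by `χ̃ s < 0` and taking the supremum over `s ≤ -1` shows that
`Q₀(ε) / ε` is non-increasing on `(0, 1]`. In both cases `Q(t)² / t` is then `q t / t` on
`(0, 1]`, with `q = Q₀ / Q₀(1)` (resp. `q t = t`) and `q 1 = 1`, glued at `t = 1` to `1 / t`.
-/

open Set

/-- Membership in the class `𝒲̃⁻`: convex, non-decreasing, non-positive, vanishing at `0`,
and not identically `0` on `(−∞,0]`. -/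
def WtildeMinus (χ : ℝ → ℝ) : Prop :=
  ConvexOn ℝ (Set.Iic 0) χ ∧ MonotoneOn χ (Set.Iic 0) ∧ (∀ t ≤ (0 : ℝ), χ t ≤ 0) ∧
    χ 0 = 0 ∧ ∃ t ≤ (0 : ℝ), χ t ≠ 0

theorem ConvexOn.map_mul_le {s : Set ℝ} {f : ℝ → ℝ} (hf : ConvexOn ℝ s f) (h0 : 0 ∈ s)
    (hf0 : f 0 = 0) {x a : ℝ} (hx : x ∈ s) (ha₀ : 0 ≤ a) (ha₁ : a ≤ 1) :
    f (a * x) ≤ a * f x := by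
  simpa [hf0] using hf.2 h0 hx (sub_nonneg.2 ha₁) ha₀ (sub_add_cancel 1 a)

theorem ConvexOn.mul_map_mul_le_mul_map_mul {s : Set ℝ} {f : ℝ → ℝ} (hf : ConvexOn ℝ s f)
    (h0 : 0 ∈ s) (hf0 : f 0 = 0) {x ε ε' : ℝ} (hx : ε' * x ∈ s) (hε : 0 < ε)
    (hεε' : ε ≤ ε') : ε' * f (ε * x) ≤ ε * f (ε' * x) := by
  have hε' : 0 < ε' := hε.trans_le hεε'
  have hscaled := hf.map_mul_le h0 hf0 hx (div_nonneg hε.le hε'.le) ((div_le_one hε').2 hεε')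
  rw [← mul_assoc, div_mul_cancel₀ ε hε'.ne'] at hscaled
  calc ε' * f (ε * x) ≤ ε' * (ε / ε' * f (ε' * x)) := by gcongr
    _ = ε * f (ε' * x) := by field_simp

/-- The paper's `Q₀(ε) = sup_{s ≤ −1} χ(ε s)/χ̃(s)`. -/
noncomputable def ratioSup (χ χt : ℝ → ℝ) (ε : ℝ) : ℝ :=
  ⨆ s : Iic (-1 : ℝ), χ (ε * s) / χt s

theorem ratio_nonneg {χ χt : ℝ → ℝ} (hχ : ∀ t ≤ (0 : ℝ), χ t ≤ 0)
    (hχt : ∀ s ≤ (-1 : ℝ), χt s < 0) {ε s : ℝ} (hε : 0 ≤ ε) (hs : s ≤ -1) :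
    0 ≤ χ (ε * s) / χt s :=
  div_nonneg_of_nonpos (hχ _ (mul_nonpos_of_nonneg_of_nonpos hε (by linarith)))
    (hχt s hs).le

theorem ratio_le_one {χ χt : ℝ → ℝ} (hmono : MonotoneOn χ (Iic 0))
    (hle : ∀ t ≤ (0 : ℝ), χt t ≤ χ t) (hχt : ∀ s ≤ (-1 : ℝ), χt s < 0) {ε s : ℝ}
    (hε : 0 ≤ ε) (hε₁ : ε ≤ 1) (hs : s ≤ -1) : χ (ε * s) / χt s ≤ 1 := by
  rw [div_le_one_of_neg (hχt s hs)]
  calc χt s ≤ χ s := hle s (by linarith)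
    _ ≤ χ (ε * s) := hmono (mem_Iic.2 (by linarith)) (mem_Iic.2 (by nlinarith)) (by nlinarith)

theorem le_ratioSup {χ χt : ℝ → ℝ} (hmono : MonotoneOn χ (Iic 0))
    (hle : ∀ t ≤ (0 : ℝ), χt t ≤ χ t) (hχt : ∀ s ≤ (-1 : ℝ), χt s < 0) {ε : ℝ}
    (hε : 0 ≤ ε) (hε₁ : ε ≤ 1) (s : Iic (-1 : ℝ)) : χ (ε * s) / χt s ≤ ratioSup χ χt ε :=
  le_ciSup (f := fun s : Iic (-1 : ℝ) => χ (ε * s) / χt s)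
    ⟨1, by rintro _ ⟨s, rfl⟩; exact ratio_le_one hmono hle hχt hε hε₁ s.2⟩ s

theorem ratioSup_nonneg {χ χt : ℝ → ℝ} (hχ : ∀ t ≤ (0 : ℝ), χ t ≤ 0)
    (hχt : ∀ s ≤ (-1 : ℝ), χt s < 0) {ε : ℝ} (hε : 0 ≤ ε) : 0 ≤ ratioSup χ χt ε :=
  Real.iSup_nonneg fun s => ratio_nonneg hχ hχt hε s.2

theorem ratioSup_one_pos {χ χt : ℝ → ℝ} (hmono : MonotoneOn χ (Iic 0))
    (hle : ∀ t ≤ (0 : ℝ), χt t ≤ χ t) (hχt : ∀ s ≤ (-1 : ℝ), χt s < 0) {t₀ : ℝ}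
    (ht₀ : t₀ ≤ 0) (hχ₀ : χ t₀ < 0) : 0 < ratioSup χ χt 1 := by
  set s₀ := min t₀ (-1)
  have hs₀ : s₀ ≤ -1 := min_le_right _ _
  have hχs₀ : χ s₀ < 0 :=
    (hmono (by simp) ht₀ (min_le_left _ _)).trans_lt hχ₀
  calc 0 < χ (1 * s₀) / χt s₀ := by rw [one_mul]; exact div_pos_of_neg_of_neg hχs₀ (hχt s₀ hs₀)
    _ ≤ ratioSup χ χt 1 := le_ratioSup hmono hle hχt zero_le_one le_rfl ⟨s₀, hs₀⟩

theorem ratioSup_div_antitoneOn {χ χt : ℝ → ℝ} (hconv : ConvexOn ℝ (Iic 0) χ) (h0 : χ 0 = 0)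
    (hmono : MonotoneOn χ (Iic 0)) (hle : ∀ t ≤ (0 : ℝ), χt t ≤ χ t)
    (hχt : ∀ s ≤ (-1 : ℝ), χt s < 0) :
    AntitoneOn (fun ε => ratioSup χ χt ε / ε) (Ioc 0 1) := by
  intro ε hε ε' hε' hεε'
  rw [div_le_iff₀ hε'.1, div_mul_eq_mul_div]
  refine ciSup_le fun s => ?_
  have hs : (s : ℝ) ≤ 0 := s.2.trans (by norm_num)
  have hscaled := hconv.mul_map_mul_le_mul_map_mul self_mem_Iic h0
    (mul_nonpos_of_nonneg_of_nonpos hε'.1.le hs) hε.1 hεε'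
  rw [le_div_iff₀ hε.1]
  calc χ (ε' * s) / χt s * ε = ε * χ (ε' * s) / χt s := by ring
    _ ≤ ε' * χ (ε * s) / χt s := div_le_div_of_nonpos_of_le (hχt s s.2).le hscaled
    _ = χ (ε * s) / χt s * ε' := by ring
    _ ≤ ratioSup χ χt ε * ε' := by
      gcongr
      · exact hε'.1.le
      · exact le_ratioSup hmono hle hχt hε.1.le hε.2 s

theorem antitoneOn_ite_sqrt_sq_div {q : ℝ → ℝ} (hq₁ : q 1 = 1) (hq₀ : ∀ t ∈ Ioc 0 1, 0 ≤ q t)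
    (hq : AntitoneOn (fun t => q t / t) (Ioc 0 1)) :
    AntitoneOn (fun t => (if 1 ≤ t then 1 else √(q t)) ^ 2 / t) (Ioi 0) := by
  rw [← Ioc_union_Ici_eq_Ioi zero_lt_one]
  refine AntitoneOn.union_right (c := 1) (hq.congr ?_)
    ((inv_antitoneOn_Ioi.mono fun t ht => zero_lt_one.trans_le ht).congr ?_)
    (isGreatest_Ioc zero_lt_one) isLeast_Ici
  · intro t ht
    rcases ht.2.lt_or_eq with ht₁ | rfl
    · simp [ht₁.not_ge, Real.sq_sqrt (hq₀ t ht)]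
    · simp [hq₁]
  · intro t ht
    simp [mem_Ici.1 ht]

theorem Q_squared_div_t_antitone_general
    (M : ℝ) (χ χt : ℝ → ℝ)
    (hχt : WtildeMinus χt ∨ WplusM M χt)
    (hle : ∀ t ≤ (0 : ℝ), χt t ≤ χ t) (hχtm1 : χt (-1) < 0) :
    ∀ Q0 : ℝ → ℝ,
      Q0 = (fun ε => ⨆ s : Set.Iic (-1 : ℝ), χ (ε * (s : ℝ)) / χt (s : ℝ)) →
      (WtildeMinus χ →
        0 < Q0 1 ∧
        AntitoneOn
          (fun t => (if 1 ≤ t then 1 else Real.sqrt (Q0 t / Q0 1)) ^ 2 / t)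
          (Set.Ioi 0)) ∧
      (WplusM M χ →
        AntitoneOn
          (fun t => (if 1 ≤ t then (1 : ℝ) else Real.sqrt t) ^ 2 / t)
          (Set.Ioi 0)) := by
  intro Q0 hQ0
  change Q0 = ratioSup χ χt at hQ0
  subst hQ0
  have hχt_mono : MonotoneOn χt (Iic 0) := hχt.elim (·.2.1) (·.2.1)
  have hχt_neg : ∀ s ≤ (-1 : ℝ), χt s < 0 := fun s hs =>
    (hχt_mono (mem_Iic.2 (by linarith)) (mem_Iic.2 (by norm_num)) hs).trans_lt hχtm1
  refine ⟨fun ⟨hconv, hmono, hnonpos, h0, t₀, ht₀, hχ₀⟩ => ?_, fun _ => ?_⟩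
  · have hQ₁ : 0 < ratioSup χ χt 1 :=
      ratioSup_one_pos hmono hle hχt_neg ht₀ ((hnonpos t₀ ht₀).lt_of_ne hχ₀)
    refine ⟨hQ₁, antitoneOn_ite_sqrt_sq_div (div_self hQ₁.ne')
      (fun t ht => div_nonneg (ratioSup_nonneg hnonpos hχt_neg ht.1.le) hQ₁.le) ?_⟩
    intro a ha b hb hab
    simp only [div_right_comm _ (ratioSup χ χt 1)]
    exact div_le_div_of_nonneg_right
      (ratioSup_div_antitoneOn hconv h0 hmono hle hχt_neg ha hb hab) hQ₁.le
  · exact antitoneOn_ite_sqrt_sq_div (q := fun t => t) rfl (fun t ht => ht.1.le)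
      (antitoneOn_const.congr fun t ht => (div_self ht.1.ne').symm)

/-- Lemma 3.4 of the paper: with `Q₀(ε) := sup_{s ≤ −1} χ(ε·s)/χ̃(s)`, one has `Q₀(1) > 0`
when `χ ∈ 𝒲̃⁻`, and the function `h(t) = Q(t)²/t` is non-increasing on `(0,∞)`, where
`Q(t) = 1` for `t ≥ 1` and, for `0 < t < 1`, `Q(t) = (Q₀(t)/Q₀(1))^{1/2}` if `χ ∈ 𝒲̃⁻`
and `Q(t) = t^{1/2}` if `χ ∈ 𝒲⁺_M`. -/
theorem Q_squared_div_t_antitone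
    (M : ℝ) (hM : 1 ≤ M) (χ χt : ℝ → ℝ)
    (hχ : WtildeMinus χ ∨ WplusM M χ) (hχt : WtildeMinus χt ∨ WplusM M χt)
    (hle : ∀ t ≤ (0 : ℝ), χt t ≤ χ t) (hχtm1 : χt (-1) < 0) :
    ∀ Q0 : ℝ → ℝ,
      Q0 = (fun ε => ⨆ s : Set.Iic (-1 : ℝ), χ (ε * (s : ℝ)) / χt (s : ℝ)) →
      (WtildeMinus χ →
        0 < Q0 1 ∧
        AntitoneOn
          (fun t => (if 1 ≤ t then 1 else Real.sqrt (Q0 t / Q0 1)) ^ 2 / t)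
          (Set.Ioi 0)) ∧
      (WplusM M χ →
        AntitoneOn
          (fun t => (if 1 ≤ t then (1 : ℝ) else Real.sqrt t) ^ 2 / t)
          (Set.Ioi 0)) :=
  Q_squared_div_t_antitone_general M χ χt hχt hle hχtm1
end

section
/- Let M ≥ 1 and let χ : (−∞,0] → (−∞,0] be concave, non-decreasing, not identically 0, with χ(0) = 0, differentiable at every t < 0, and satisfying |t·χ'(t)| ≤ M·|χ(t)| for every t < 0. Then χ(t) < 0 for every t < 0, and for every t ≤ 0 and every λ ≥ 1 one has −χ(λ·t) ≤ λ^M·(−χ(t)). -/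
open Set

/-!
On `(-∞, 0)` the bound `|t χ'(t)| ≤ M |χ(t)|` says exactly that `log (-χ t) - M log (-t)` is
non-decreasing, and comparing its values at `λ t ≤ t` gives `-χ(λ t) ≤ λ ^ M (-χ t)`.

For this, `χ` must not vanish on `(-∞, 0)`; otherwise let `c < 0` be the infimum of its zeros,
so that `χ < 0` left of `c`. At a zero `z` of a concave function, the tangent at `s < z` lies above `(z, 0)`, so
`-χ s ≤ (z - s) χ' s`; with the bound, `-s ≤ M (z - s)`, which fails for `s < c ≤ z` close to `c`.
-/

section LogGrowth

variable {f f' : ℝ → ℝ} {M : ℝ}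

theorem hasDerivAt_log_neg_sub_mul_log_neg {x : ℝ} (hx : x < 0) (hfx : f x < 0)
    (hf : HasDerivAt f (f' x) x) :
    HasDerivAt (fun y => Real.log (-f y) - M * Real.log (-y)) (f' x / f x - M / x) x := by
  have hlog_f : HasDerivAt (fun y => Real.log (-f y)) (-f' x / -f x) x :=
    hf.neg.log (neg_ne_zero.mpr hfx.ne)
  have hlog_id : HasDerivAt (fun y : ℝ => Real.log (-y)) (-1 / -x) x :=
    (hasDerivAt_neg x).log (neg_ne_zero.mpr hx.ne)
  refine (hlog_f.sub (hlog_id.const_mul M)).congr_deriv ?_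
  rw [neg_div_neg_eq, neg_div_neg_eq, mul_one_div]

theorem monotoneOn_log_neg_sub_mul_log_neg (hf : ∀ x < 0, f x < 0)
    (hderiv : ∀ x < 0, HasDerivAt f (f' x) x) (hbound : ∀ x < 0, M * f x ≤ x * f' x) :
    MonotoneOn (fun y => Real.log (-f y) - M * Real.log (-y)) (Iio 0) := by
  have hg (x : ℝ) (hx : x ∈ Iio 0) := hasDerivAt_log_neg_sub_mul_log_neg (M := M) hx (hf x hx)
    (hderiv x hx)
  refine monotoneOn_of_hasDerivWithinAt_nonneg (convex_Iio 0)
    (fun x hx => (hg x hx).continuousAt.continuousWithinAt)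
    (fun x hx => (hg x (interior_subset hx)).hasDerivWithinAt) fun x hx => ?_
  rw [interior_Iio] at hx
  have hx : x < 0 := hx
  rw [div_sub_div _ _ (hf x hx).ne hx.ne]
  exact div_nonneg (by linarith [hbound x hx]) (mul_pos_of_neg_of_neg (hf x hx) hx).le

theorem neg_le_rpow_mul_neg_of_mul_le_mul_deriv (hf : ∀ x < 0, f x < 0)
    (hderiv : ∀ x < 0, HasDerivAt f (f' x) x) (hbound : ∀ x < 0, M * f x ≤ x * f' x)
    {t lam : ℝ} (ht : t < 0) (hlam : 1 ≤ lam) :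
    -f (lam * t) ≤ lam ^ M * -f t := by
  have hlam_pos : 0 < lam := one_pos.trans_le hlam
  have hlam_t : lam * t < 0 := mul_neg_of_pos_of_neg hlam_pos ht
  have hmono := monotoneOn_log_neg_sub_mul_log_neg hf hderiv hbound hlam_t ht
    (by nlinarith : lam * t ≤ t)
  have hlog : Real.log (-(lam * t)) = Real.log lam + Real.log (-t) := by
    rw [← Real.log_mul hlam_pos.ne' (neg_ne_zero.mpr ht.ne), mul_neg]
  have hlog_le : Real.log (-f (lam * t)) ≤ Real.log (lam ^ M * -f t) := by
    rw [Real.log_mul (Real.rpow_pos_of_pos hlam_pos M).ne' (neg_ne_zero.mpr (hf t ht).ne),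
      Real.log_rpow hlam_pos]
    simp only [hlog] at hmono
    linarith
  exact (Real.log_le_log_iff (neg_pos.mpr (hf _ hlam_t))
    (mul_pos (Real.rpow_pos_of_pos hlam_pos M) (neg_pos.mpr (hf t ht)))).mp hlog_le

end LogGrowth

section Nonvanishing

variable {χ χ' : ℝ → ℝ} {M : ℝ}

theorem neg_le_mul_sub_of_concaveOn {S : Set ℝ} (hconc : ConcaveOn ℝ S χ) {s z : ℝ}
    (hs : s ∈ S) (hz : z ∈ S) (hsz : s < z) (hχs : χ s < 0) (hχz : χ z = 0)
    (hderiv : HasDerivAt χ (χ' s) s) (hbound : |s * χ' s| ≤ M * |χ s|) :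
    -s ≤ M * (z - s) := by
  have htangent : -χ s ≤ (z - s) * χ' s := by
    have hslope := hconc.slope_le_of_hasDerivAt hs hz hsz hderiv
    rw [slope_def_field, hχz, div_le_iff₀ (sub_pos.mpr hsz)] at hslope
    linarith
  have hχ's : 0 < χ' s := pos_of_mul_pos_right (by linarith) (sub_pos.mpr hsz).le
  have hM : 0 ≤ M := nonneg_of_mul_nonneg_left ((abs_nonneg _).trans hbound) (abs_pos.mpr hχs.ne)
  rw [abs_of_neg hχs] at hbound
  refine le_of_mul_le_mul_right ?_ hχ's
  calc -s * χ' s ≤ M * -χ s := by linarith [neg_abs_le (s * χ' s)]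
    _ ≤ M * ((z - s) * χ' s) := mul_le_mul_of_nonneg_left htangent hM
    _ = M * (z - s) * χ' s := by ring

theorem neg_of_concaveOn_of_abs_mul_deriv_le (hM : 0 < M) (hconc : ConcaveOn ℝ (Iic 0) χ)
    (hmono : MonotoneOn χ (Iic 0)) (hneg : ∀ t ≤ 0, χ t ≤ 0) (hnontriv : ∃ t ≤ 0, χ t ≠ 0)
    (hderiv : ∀ t < 0, HasDerivAt χ (χ' t) t) (hbound : ∀ t < 0, |t * χ' t| ≤ M * |χ t|)
    {t : ℝ} (ht : t < 0) : χ t < 0 := by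
  refine (hneg t ht.le).lt_of_ne fun hχt => ?_
  obtain ⟨t₀, ht₀, hχt₀⟩ := hnontriv
  set Z := {z | z ≤ 0 ∧ χ z = 0}
  have hZ_bdd : BddBelow Z := ⟨t₀, fun z hz => le_of_not_ge fun hzt₀ =>
    hχt₀ (le_antisymm (hneg t₀ ht₀) (hz.2 ▸ hmono hz.1 ht₀ hzt₀))⟩
  set c := sInf Z
  have hc : c < 0 := (csInf_le hZ_bdd ⟨ht.le, hχt⟩).trans_lt ht
  set δ := -c / (2 * M)
  have hδ : 0 < δ := div_pos (neg_pos.mpr hc) (by positivity)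
  obtain ⟨z, ⟨hz, hχz⟩, hz_lt⟩ := exists_lt_of_csInf_lt (⟨t, ht.le, hχt⟩ : Z.Nonempty)
    (lt_add_of_pos_right c hδ)
  have hs : c - δ < 0 := by linarith
  have hχs : χ (c - δ) < 0 := (hneg _ hs.le).lt_of_ne fun h =>
    (csInf_le hZ_bdd ⟨hs.le, h⟩).not_gt (sub_lt_self _ hδ)
  have hsz : c - δ < z := by linarith [csInf_le hZ_bdd ⟨hz, hχz⟩]
  have key := neg_le_mul_sub_of_concaveOn hconc hs.le hz hsz hχs hχz
    (hderiv _ hs) (hbound _ hs)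
  have hMδ : M * (2 * δ) = -c := by
    simp only [δ]; field_simp
  have : M * (z - (c - δ)) < M * (2 * δ) := mul_lt_mul_of_pos_left (by linarith) hM
  linarith

end Nonvanishing

theorem weight_growth_estimate_general
    (M : ℝ) (hM : 1 ≤ M) (χ χ' : ℝ → ℝ)
    (hconc : ConcaveOn ℝ (Set.Iic 0) χ) (hmono : MonotoneOn χ (Set.Iic 0))
    (hneg : ∀ t ≤ (0 : ℝ), χ t ≤ 0)
    (hnontriv : ∃ t ≤ (0 : ℝ), χ t ≠ 0)
    (hderiv : ∀ t < (0 : ℝ), HasDerivAt χ (χ' t) t)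
    (hbound : ∀ t < (0 : ℝ), |t * χ' t| ≤ M * |χ t|) :
    (∀ t < (0 : ℝ), χ t < 0) ∧
    ∀ t ≤ (0 : ℝ), ∀ lam : ℝ, 1 ≤ lam → -χ (lam * t) ≤ lam ^ M * (-χ t) := by
  have hχ_neg (t : ℝ) (ht : t < 0) : χ t < 0 :=
    neg_of_concaveOn_of_abs_mul_deriv_le (one_pos.trans_le hM) hconc hmono hneg hnontriv
      hderiv hbound ht
  have hbound' (t : ℝ) (ht : t < 0) : M * χ t ≤ t * χ' t := by
    have := hbound t ht
    rw [abs_of_neg (hχ_neg t ht)] at this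
    linarith [neg_abs_le (t * χ' t)]
  refine ⟨hχ_neg, fun t ht lam hlam => ?_⟩
  rcases ht.lt_or_eq with ht | rfl
  · exact neg_le_rpow_mul_neg_of_mul_le_mul_deriv hχ_neg hderiv hbound' ht hlam
  · rw [mul_zero]
    exact le_mul_of_one_le_left (neg_nonneg.mpr (hneg 0 le_rfl))
      (Real.one_le_rpow hlam (zero_le_one.trans hM))

/-- Growth estimate for weights in the class `𝒲⁺_M` (used in the proof of Proposition 3.5
of the paper): if `χ : (−∞,0] → (−∞,0]` is concave, non-decreasing, not identically `0`,
vanishes at `0`, is differentiable at every `t < 0` with `|t·χ'(t)| ≤ M·|χ(t)|`, then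
`χ(t) < 0` for every `t < 0` and `−χ(λ·t) ≤ λ^M·(−χ(t))` for all `t ≤ 0` and `λ ≥ 1`. -/
theorem weight_growth_estimate
    (M : ℝ) (hM : 1 ≤ M) (χ χ' : ℝ → ℝ)
    (hconc : ConcaveOn ℝ (Set.Iic 0) χ) (hmono : MonotoneOn χ (Set.Iic 0))
    (hneg : ∀ t ≤ (0 : ℝ), χ t ≤ 0) (hzero : χ 0 = 0)
    (hnontriv : ∃ t ≤ (0 : ℝ), χ t ≠ 0)
    (hderiv : ∀ t < (0 : ℝ), HasDerivAt χ (χ' t) t)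
    (hbound : ∀ t < (0 : ℝ), |t * χ' t| ≤ M * |χ t|) :
    (∀ t < (0 : ℝ), χ t < 0) ∧
    ∀ t ≤ (0 : ℝ), ∀ lam : ℝ, 1 ≤ lam → -χ (lam * t) ≤ lam ^ M * (-χ t) :=
  weight_growth_estimate_general M hM χ χ' hconc hmono hneg hnontriv hderiv hbound
end

section
/- Let n ≥ 1 be an integer and let R > r > 0. Let u : B_{R+r} → [−∞, 0] be a measurable function on the ball B_{R+r} := {z ∈ ℂⁿ : |z| < R+r} such that A := ∫_{B_{R+r}} e^{−u} dV < ∞, where dV is Lebesgue measure on ℂⁿ ≅ ℝ^{2n} (in particular u is finite almost everywhere and integrable on B_{R+r}). Let h be a non-negative smooth function on ℂⁿ with ∫_{ℂⁿ} h dV = 1 and supp h ⊆ B_ε for some ε ∈ (0, r), and define (u ∗ h)(z) := ∫_{ℂⁿ} u(z−w)·h(w) dV(w) for z ∈ B_R. Then for every 0 < a < 1 there exists a constant C > 0 depending only on R, n, a and A such that |∫_{B_R} (u ∗ h − u) dV| ≤ C·ε^a. -/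
open MeasureTheory Metric ENNReal

set_option maxHeartbeats 1000000

variable {N : ℕ}

lemma shift_mem_ball_iff (R : ℝ) (w z : EuclideanSpace ℝ (Fin N)) :
    z ∈ ball (0 : EuclideanSpace ℝ (Fin N)) R ↔ z - w ∈ ball (-w) R := by
  simp [mem_ball_iff_norm, sub_neg_eq_add, sub_add_cancel]

lemma shift_setIntegral (u : EuclideanSpace ℝ (Fin N) → ℝ) (R : ℝ)
    (w : EuclideanSpace ℝ (Fin N)) :
    ∫ z in ball (0 : EuclideanSpace ℝ (Fin N)) R, u (z - w) = ∫ z in ball (-w) R, u z := by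
  calc ∫ z in ball (0 : EuclideanSpace ℝ (Fin N)) R, u (z - w)
      = ∫ z, (ball (0 : EuclideanSpace ℝ (Fin N)) R).indicator (fun z => u (z - w)) z :=
        (integral_indicator measurableSet_ball).symm
    _ = ∫ z, (ball (-w) R).indicator u (z - w) := by
        congr 1; ext z
        by_cases hz : z ∈ ball (0 : EuclideanSpace ℝ (Fin N)) R
        · rw [Set.indicator_of_mem hz, Set.indicator_of_mem ((shift_mem_ball_iff R w z).1 hz)]
        · rw [Set.indicator_of_notMem hz,
            Set.indicator_of_notMem (fun hc => hz ((shift_mem_ball_iff R w z).2 hc))]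
    _ = ∫ z, (ball (-w) R).indicator u z := integral_sub_right_eq_self _ w
    _ = ∫ z in ball (-w) R, u z := integral_indicator measurableSet_ball

lemma shift_setLIntegral (g : EuclideanSpace ℝ (Fin N) → ℝ≥0∞) (R : ℝ)
    (w : EuclideanSpace ℝ (Fin N)) :
    ∫⁻ z in ball (0 : EuclideanSpace ℝ (Fin N)) R, g (z - w) = ∫⁻ z in ball (-w) R, g z := by
  calc ∫⁻ z in ball (0 : EuclideanSpace ℝ (Fin N)) R, g (z - w)
      = ∫⁻ z, (ball (0 : EuclideanSpace ℝ (Fin N)) R).indicator (fun z => g (z - w)) z :=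
        (lintegral_indicator measurableSet_ball _).symm
    _ = ∫⁻ z, (ball (-w) R).indicator g (z - w) := by
        congr 1; ext z
        by_cases hz : z ∈ ball (0 : EuclideanSpace ℝ (Fin N)) R
        · rw [Set.indicator_of_mem hz, Set.indicator_of_mem ((shift_mem_ball_iff R w z).1 hz)]
        · rw [Set.indicator_of_notMem hz,
            Set.indicator_of_notMem (fun hc => hz ((shift_mem_ball_iff R w z).2 hc))]
    _ = ∫⁻ z, (ball (-w) R).indicator g z := lintegral_sub_right_eq_self _ w
    _ = ∫⁻ z in ball (-w) R, g z := lintegral_indicator measurableSet_ball _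

/-- Lemma 4.7 of the paper: if `u : B_{R+r} → [−∞,0]` is measurable with
`A := ∫_{B_{R+r}} e^{−u} dV < ∞` and `h` is a smooth probability density supported in `B_ε`
with `0 < ε < r`, then for every `0 < a < 1` there is a constant `C > 0`, depending only on
`R`, `n`, `a` and `A`, such that `|∫_{B_R} (u∗h − u) dV| ≤ C·ε^a`.
(Here `ℂⁿ` is identified with `ℝ^{2n}` with its Lebesgue measure.) -/
theorem mollification_L1_estimate
    (n : ℕ) (hn : 1 ≤ n) (R A a : ℝ) (hR : 0 < R) (hA : 0 ≤ A)
    (ha0 : 0 < a) (ha1 : a < 1) :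
    ∃ C : ℝ, 0 < C ∧
      ∀ (r ε : ℝ) (u h : EuclideanSpace ℝ (Fin (2 * n)) → ℝ),
        0 < r → r < R → 0 < ε → ε < r →
        Measurable u →
        (∀ x ∈ ball (0 : EuclideanSpace ℝ (Fin (2 * n))) (R + r), u x ≤ 0) →
        (∫⁻ x in ball (0 : EuclideanSpace ℝ (Fin (2 * n))) (R + r),
            ENNReal.ofReal (Real.exp (-u x))) ≤ ENNReal.ofReal A →
        ContDiff ℝ (⊤ : ℕ∞) h → (∀ x, 0 ≤ h x) → (∫ x, h x) = 1 →
        tsupport h ⊆ ball (0 : EuclideanSpace ℝ (Fin (2 * n))) ε →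
        |∫ z in ball (0 : EuclideanSpace ℝ (Fin (2 * n))) R,
            ((∫ w, u (z - w) * h w) - u z)| ≤ C * ε ^ a := by
  classical
  set ω : ℝ := (volume (ball (0 : EuclideanSpace ℝ (Fin (2 * n))) 1)).toReal with hω_def
  have hω : 0 ≤ ω := ENNReal.toReal_nonneg
  set C₁ : ℝ := 2 * (2 * n) * (2 * R) ^ ((2 * n) - 1) * ω with hC₁_def
  have hC₁ : 0 ≤ C₁ := by positivity
  have h1a : 0 < 1 - a := by linarith
  refine ⟨2 * (C₁ / (1 - a) + A) + 1, by have := div_nonneg hC₁ h1a.le; linarith, ?_⟩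
  intro r ε u h hr hrR hε hεr hu hu0 hAint hh hh0 hh1 hsupp
  have hεR : ε < R := by linarith
  have hmexp : Measurable fun x : EuclideanSpace ℝ (Fin (2 * n)) =>
      ENNReal.ofReal (Real.exp (-u x)) := by exact (hu.neg.exp).ennreal_ofReal
  set S : Set (EuclideanSpace ℝ (Fin (2 * n))) := ball 0 R with hS_def
  set B : Set (EuclideanSpace ℝ (Fin (2 * n))) := ball 0 (R + r) with hB_def
  have hSm : MeasurableSet S := measurableSet_ball
  have hSB : S ⊆ B := ball_subset_ball (by linarith)
  -- integrability of u on B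
  have hUbd : ∀ x ∈ B, ENNReal.ofReal |u x| ≤ ENNReal.ofReal (Real.exp (-u x)) := by
    intro x hx
    apply ENNReal.ofReal_le_ofReal
    rw [abs_of_nonpos (hu0 x hx)]
    linarith [Real.add_one_le_exp (-u x)]
  have hlintB : (∫⁻ x in B, ENNReal.ofReal |u x|) ≤ ENNReal.ofReal A :=
    le_trans (setLIntegral_mono hmexp hUbd) hAint
  have hint_uB : IntegrableOn u B := by
    refine ⟨hu.aestronglyMeasurable, ?_⟩
    rw [hasFiniteIntegral_iff_norm]
    simp_rw [Real.norm_eq_abs]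
    exact lt_of_le_of_lt hlintB ENNReal.ofReal_lt_top
  have hint_uS : IntegrableOn u S := hint_uB.mono_set hSB
  -- the key truncation estimate
  have key : ∀ M : ℝ, 0 ≤ M → ∀ P : Set (EuclideanSpace ℝ (Fin (2 * n))),
      MeasurableSet P → P ⊆ B →
      ∫ x in P, |u x| ≤ M * (volume P).toReal + Real.exp (-M) * A := by
    intro M hM P hPm hPB
    have hPfin : volume P ≠ ⊤ :=
      (lt_of_le_of_lt (measure_mono (hPB.trans Set.Subset.rfl)) measure_ball_lt_top).ne
    have hpt : ∀ x ∈ P, ENNReal.ofReal |u x| ≤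
        ENNReal.ofReal M + ENNReal.ofReal (Real.exp (-M)) * ENNReal.ofReal (Real.exp (-u x)) := by
      intro x hx
      rw [← ENNReal.ofReal_mul (Real.exp_nonneg _), ← ENNReal.ofReal_add hM (by positivity)]
      apply ENNReal.ofReal_le_ofReal
      rw [abs_of_nonpos (hu0 x (hPB hx))]
      have h2 := Real.add_one_le_exp (-u x - M)
      have h3 : Real.exp (-u x - M) = Real.exp (-M) * Real.exp (-u x) := by
        rw [← Real.exp_add]; ring_nf
      linarith
    have hle1 : (∫⁻ x in P, ENNReal.ofReal |u x|) ≤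
        ENNReal.ofReal M * volume P + ENNReal.ofReal (Real.exp (-M)) * ENNReal.ofReal A := by
      calc (∫⁻ x in P, ENNReal.ofReal |u x|)
          ≤ ∫⁻ x in P, (ENNReal.ofReal M +
              ENNReal.ofReal (Real.exp (-M)) * ENNReal.ofReal (Real.exp (-u x))) :=
            setLIntegral_mono (measurable_const.add (measurable_const.mul hmexp)) hpt
        _ = ENNReal.ofReal M * volume P +
            ENNReal.ofReal (Real.exp (-M)) * ∫⁻ x in P, ENNReal.ofReal (Real.exp (-u x)) := by
            rw [lintegral_add_left measurable_const, lintegral_const_mul _ hmexp,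
              setLIntegral_const]
        _ ≤ _ := by
            gcongr
            exact le_trans (lintegral_mono_set hPB) hAint
    rw [integral_eq_lintegral_of_nonneg_ae (Filter.Eventually.of_forall fun x => abs_nonneg _)
      (hu.abs.aestronglyMeasurable)]
    have hfin2 : ENNReal.ofReal M * volume P + ENNReal.ofReal (Real.exp (-M)) * ENNReal.ofReal A
        ≠ ⊤ := by
      apply ENNReal.add_ne_top.2
      constructor
      · exact ENNReal.mul_ne_top ENNReal.ofReal_ne_top hPfin
      · exact ENNReal.mul_ne_top ENNReal.ofReal_ne_top ENNReal.ofReal_ne_top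
    calc (∫⁻ x in P, ENNReal.ofReal |u x|).toReal
        ≤ (ENNReal.ofReal M * volume P +
            ENNReal.ofReal (Real.exp (-M)) * ENNReal.ofReal A).toReal :=
          ENNReal.toReal_mono hfin2 hle1
      _ = M * (volume P).toReal + Real.exp (-M) * A := by
          rw [ENNReal.toReal_add (ENNReal.mul_ne_top ENNReal.ofReal_ne_top hPfin)
            (ENNReal.mul_ne_top ENNReal.ofReal_ne_top ENNReal.ofReal_ne_top),
            ENNReal.toReal_mul, ENNReal.toReal_mul, ENNReal.toReal_ofReal hM,
            ENNReal.toReal_ofReal (Real.exp_nonneg _), ENNReal.toReal_ofReal hA]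
  -- h is integrable
  have hh_cont : Continuous h := hh.continuous
  have hh_meas : Measurable h := hh_cont.measurable
  have hcs : HasCompactSupport h := by
    apply HasCompactSupport.intro (isCompact_closedBall (0 : EuclideanSpace ℝ (Fin (2 * n))) ε)
    intro x hx
    exact image_eq_zero_of_notMem_tsupport fun hmem => hx (ball_subset_closedBall (hsupp hmem))
  have hh_int : Integrable h := hh_cont.integrable_of_hasCompactSupport hcs
  -- Fubini setup
  have hball_sub : ∀ w : EuclideanSpace ℝ (Fin (2 * n)), w ∈ ball (0 : _) ε →
      ball (-w) R ⊆ B := by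
    intro w hw x hx
    rw [mem_ball] at *
    calc dist x 0 ≤ dist x (-w) + dist (-w) 0 := dist_triangle _ _ _
      _ < R + ε := by
          have : dist (-w) (0 : EuclideanSpace ℝ (Fin (2 * n))) = dist w 0 := by
            simp [dist_eq_norm]
          linarith [hw, hx, this ▸ hw]
      _ ≤ R + r := by linarith
  have hf_aesm : AEStronglyMeasurable (fun p : _ × _ => u (p.1 - p.2) * h p.2)
      ((volume.restrict S).prod volume) :=
    ((hu.comp (measurable_fst.sub measurable_snd)).mul
      (hh_meas.comp measurable_snd)).aestronglyMeasurable
  have hf_int : Integrable (fun p : _ × _ => u (p.1 - p.2) * h p.2)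
      ((volume.restrict S).prod volume) := by
    refine ⟨hf_aesm, ?_⟩
    rw [hasFiniteIntegral_iff_norm]
    have hmeas : Measurable fun p : _ × _ => ENNReal.ofReal ‖u (p.1 - p.2) * h p.2‖ := by
      exact (((hu.comp (measurable_fst.sub measurable_snd)).mul
        (hh_meas.comp measurable_snd)).norm).ennreal_ofReal
    rw [lintegral_prod_symm _ hmeas.aemeasurable]
    have hptw : ∀ w, (∫⁻ z in S, ENNReal.ofReal ‖u (z - w) * h w‖) ≤
        ENNReal.ofReal (h w) * ENNReal.ofReal A := by
      intro w
      by_cases hw : w ∈ ball (0 : EuclideanSpace ℝ (Fin (2 * n))) ε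
      · have heq : ∀ z, ENNReal.ofReal ‖u (z - w) * h w‖ =
            ENNReal.ofReal |u (z - w)| * ENNReal.ofReal (h w) := by
          intro z
          rw [Real.norm_eq_abs, abs_mul, abs_of_nonneg (hh0 w),
            ENNReal.ofReal_mul (abs_nonneg _)]
        simp_rw [heq]
        have hm1 : Measurable fun z : EuclideanSpace ℝ (Fin (2 * n)) =>
            ENNReal.ofReal |u (z - w)| := by
          exact ((hu.comp (measurable_id.sub measurable_const)).abs).ennreal_ofReal
        rw [lintegral_mul_const _ hm1]
        rw [mul_comm]
        gcongr
        calc (∫⁻ z in S, ENNReal.ofReal |u (z - w)|)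
            = ∫⁻ z in ball (-w) R, ENNReal.ofReal |u z| :=
              shift_setLIntegral (fun z => ENNReal.ofReal |u z|) R w
          _ ≤ ∫⁻ z in B, ENNReal.ofReal |u z| := lintegral_mono_set (hball_sub w hw)
          _ ≤ ENNReal.ofReal A := hlintB
      · have hw0 : h w = 0 :=
          image_eq_zero_of_notMem_tsupport fun hmem => hw (hsupp hmem)
        simp [hw0]
    calc (∫⁻ w, ∫⁻ z in S, ENNReal.ofReal ‖u (z - w) * h w‖)
        ≤ ∫⁻ w, ENNReal.ofReal (h w) * ENNReal.ofReal A := lintegral_mono hptw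
      _ = (∫⁻ w, ENNReal.ofReal (h w)) * ENNReal.ofReal A := lintegral_mul_const _ (by exact hh_meas.ennreal_ofReal)
      _ = ENNReal.ofReal 1 * ENNReal.ofReal A := by
          rw [← ofReal_integral_eq_lintegral_ofReal hh_int
            (Filter.Eventually.of_forall hh0), hh1]
      _ < ⊤ := by finiteness
  have hG_int : IntegrableOn (fun z => ∫ w, u (z - w) * h w) S := hf_int.integral_prod_left
  set Φ : EuclideanSpace ℝ (Fin (2 * n)) → ℝ := fun w => ∫ z in ball (-w) R, u z with hΦ_def
  set c : ℝ := ∫ z in S, u z with hc_def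
  have hswap : (∫ z in S, ∫ w, u (z - w) * h w) = ∫ w, Φ w * h w := by
    rw [integral_integral_swap hf_int]
    refine integral_congr_ae (Filter.Eventually.of_forall fun w => ?_)
    show (∫ z in S, u (z - w) * h w) = Φ w * h w
    rw [integral_mul_const, shift_setIntegral u R w]
  have hΦh_int : Integrable (fun w => Φ w * h w) := by
    have h1 := hf_int.integral_prod_right
    apply h1.congr
    apply Filter.Eventually.of_forall
    intro w
    show (∫ z in S, u (z - w) * h w) = Φ w * h w
    rw [integral_mul_const, shift_setIntegral u R w]
  -- Main splitting
  have hmain : (∫ z in S, ((∫ w, u (z - w) * h w) - u z)) = ∫ w, (Φ w - c) * h w := by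
    rw [integral_sub hG_int hint_uS, hswap]
    have hch : c = ∫ w, c * h w := by rw [integral_const_mul, hh1, mul_one]
    rw [← hc_def]
    conv_lhs => rw [hch]
    rw [← integral_sub hΦh_int (hh_int.const_mul c)]
    congr 1; ext w; ring
  -- annulus and constants
  set Ann : Set (EuclideanSpace ℝ (Fin (2 * n))) :=
    ball 0 (R + ε) \ ball 0 (R - ε) with hAnn_def
  have hAnnm : MeasurableSet Ann := measurableSet_ball.diff measurableSet_ball
  have hAnnB : Ann ⊆ B := (Set.diff_subset).trans (ball_subset_ball (by linarith))
  set M : ℝ := max (-Real.log ε) 0 with hM_def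
  have hM : 0 ≤ M := le_max_right _ _
  set K : ℝ := 2 * (M * (volume Ann).toReal + Real.exp (-M) * A) with hK_def
  have hint_absAnn : IntegrableOn (fun x => |u x|) Ann := (hint_uB.mono_set hAnnB).abs
  -- bound |Φ w - c| for w in the support
  have hΦc : ∀ w ∈ ball (0 : EuclideanSpace ℝ (Fin (2 * n))) ε, |Φ w - c| ≤ K := by
    intro w hw
    set T : Set (EuclideanSpace ℝ (Fin (2 * n))) := ball (-w) R with hT_def
    have hTm : MeasurableSet T := measurableSet_ball
    have hTB : T ⊆ B := hball_sub w hw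
    have hTu : IntegrableOn u T := hint_uB.mono_set hTB
    have hwn : ‖w‖ < ε := by rwa [mem_ball, dist_zero_right] at hw
    have hTdiff : T \ S ⊆ Ann := by
      rintro x ⟨hx1, hx2⟩
      constructor
      · rw [mem_ball, dist_zero_right]
        rw [mem_ball_iff_norm] at hx1
        calc ‖x‖ = ‖x - -w + -w‖ := by rw [sub_add_cancel]
          _ ≤ ‖x - -w‖ + ‖-w‖ := norm_add_le _ _
          _ < R + ε := by rw [norm_neg]; linarith
      · intro hx3
        rw [mem_ball, dist_zero_right] at hx3
        apply hx2
        rw [hS_def, mem_ball, dist_zero_right]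
        linarith
    have hSdiff : S \ T ⊆ Ann := by
      rintro x ⟨hx1, hx2⟩
      rw [hS_def, mem_ball, dist_zero_right] at hx1
      constructor
      · rw [mem_ball, dist_zero_right]; linarith
      · intro hx3
        rw [mem_ball, dist_zero_right] at hx3
        apply hx2
        rw [hT_def, mem_ball_iff_norm]
        calc ‖x - -w‖ = ‖x + w‖ := by rw [sub_neg_eq_add]
          _ ≤ ‖x‖ + ‖w‖ := norm_add_le _ _
          _ < R := by linarith
    have h1 : (∫ z in T, u z) = (∫ z in T \ S, u z) + ∫ z in T ∩ S, u z := by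
      rw [← setIntegral_union (Set.disjoint_sdiff_inter) (hTm.inter hSm)
        (hTu.mono_set Set.diff_subset) (hTu.mono_set Set.inter_subset_left),
        Set.diff_union_inter]
    have h2 : c = (∫ z in S \ T, u z) + ∫ z in T ∩ S, u z := by
      rw [Set.inter_comm]
      rw [hc_def, ← setIntegral_union (Set.disjoint_sdiff_inter) (hSm.inter hTm)
        (hint_uS.mono_set Set.diff_subset) (hint_uS.mono_set Set.inter_subset_left),
        Set.diff_union_inter]
    have h3 : Φ w - c = (∫ z in T \ S, u z) - ∫ z in S \ T, u z := by
      rw [hΦ_def]; simp only []; rw [h1, h2]; ring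
    have habs1 : |∫ z in T \ S, u z| ≤ ∫ x in Ann, |u x| := by
      calc |∫ z in T \ S, u z| ≤ ∫ z in T \ S, |u z| := by
            simpa [Real.norm_eq_abs] using
              norm_integral_le_integral_norm (μ := volume.restrict (T \ S)) u
        _ ≤ ∫ x in Ann, |u x| := by
            apply setIntegral_mono_set hint_absAnn
            · exact Filter.Eventually.of_forall fun x => abs_nonneg _
            · exact HasSubset.Subset.eventuallyLE hTdiff
    have habs2 : |∫ z in S \ T, u z| ≤ ∫ x in Ann, |u x| := by
      calc |∫ z in S \ T, u z| ≤ ∫ z in S \ T, |u z| := by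
            simpa [Real.norm_eq_abs] using
              norm_integral_le_integral_norm (μ := volume.restrict (S \ T)) u
        _ ≤ ∫ x in Ann, |u x| := by
            apply setIntegral_mono_set hint_absAnn
            · exact Filter.Eventually.of_forall fun x => abs_nonneg _
            · exact HasSubset.Subset.eventuallyLE hSdiff
    have hkey := key M hM Ann hAnnm hAnnB
    calc |Φ w - c| ≤ |∫ z in T \ S, u z| + |∫ z in S \ T, u z| := by
          rw [h3]; exact abs_sub _ _
      _ ≤ 2 * ∫ x in Ann, |u x| := by linarith
      _ ≤ K := by rw [hK_def]; linarith
  -- conclude the integral bound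
  have hbound : |∫ w, (Φ w - c) * h w| ≤ K := by
    have hK0 : 0 ≤ K := by
      have := hΦc 0 (by simpa using hε)
      linarith [abs_nonneg (Φ 0 - c)]
    have h1 : |∫ w, (Φ w - c) * h w| ≤ ∫ w, K * h w := by
      rw [← Real.norm_eq_abs]
      apply norm_integral_le_of_norm_le (hh_int.const_mul K)
      apply Filter.Eventually.of_forall
      intro w
      rw [Real.norm_eq_abs, abs_mul, abs_of_nonneg (hh0 w)]
      by_cases hw : w ∈ ball (0 : EuclideanSpace ℝ (Fin (2 * n))) ε
      · exact mul_le_mul_of_nonneg_right (hΦc w hw) (hh0 w)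
      · have hw0 : h w = 0 :=
          image_eq_zero_of_notMem_tsupport fun hmem => hw (hsupp hmem)
        simp [hw0]
    rw [integral_const_mul, hh1, mul_one] at h1
    exact h1
  -- volume of the annulus
  have hAnnvol : (volume Ann).toReal ≤ C₁ * ε := by
    have hsub : ball (0 : EuclideanSpace ℝ (Fin (2 * n))) (R - ε) ⊆ ball 0 (R + ε) :=
      ball_subset_ball (by linarith)
    have hd1 : volume Ann = volume (ball (0 : EuclideanSpace ℝ (Fin (2 * n))) (R + ε)) -
        volume (ball (0 : EuclideanSpace ℝ (Fin (2 * n))) (R - ε)) :=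
      measure_diff hsub measurableSet_ball.nullMeasurableSet measure_ball_lt_top.ne
    have hb1 : volume (ball (0 : EuclideanSpace ℝ (Fin (2 * n))) (R + ε)) =
        ENNReal.ofReal ((R + ε) ^ (2 * n)) * volume (ball (0 : EuclideanSpace ℝ (Fin (2 * n))) 1) := by
      rw [Measure.addHaar_ball_of_pos _ _ (by linarith : (0:ℝ) < R + ε), finrank_euclideanSpace_fin]
    have hb2 : volume (ball (0 : EuclideanSpace ℝ (Fin (2 * n))) (R - ε)) =
        ENNReal.ofReal ((R - ε) ^ (2 * n)) * volume (ball (0 : EuclideanSpace ℝ (Fin (2 * n))) 1) := by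
      rw [Measure.addHaar_ball_of_pos _ _ (by linarith : (0:ℝ) < R - ε), finrank_euclideanSpace_fin]
    have hωfin : volume (ball (0 : EuclideanSpace ℝ (Fin (2 * n))) 1) ≠ ⊤ :=
      measure_ball_lt_top.ne
    have hle : ENNReal.ofReal ((R - ε) ^ (2 * n)) * volume (ball (0 : EuclideanSpace ℝ (Fin (2 * n))) 1)
        ≤ ENNReal.ofReal ((R + ε) ^ (2 * n)) * volume (ball (0 : EuclideanSpace ℝ (Fin (2 * n))) 1) := by
      exact mul_le_mul_left (ENNReal.ofReal_le_ofReal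
        (pow_le_pow_left₀ (by linarith) (by linarith) _)) _
    have htoReal : (volume Ann).toReal = ((R + ε) ^ (2 * n) - (R - ε) ^ (2 * n)) * ω := by
      rw [hd1, hb1, hb2, ENNReal.toReal_sub_of_le hle
        (ENNReal.mul_ne_top ENNReal.ofReal_ne_top hωfin), ENNReal.toReal_mul,
        ENNReal.toReal_mul, ENNReal.toReal_ofReal (pow_nonneg (by linarith) _),
        ENNReal.toReal_ofReal (pow_nonneg (by linarith) _), hω_def]
      ring
    have hgeom : (R + ε) ^ (2 * n) - (R - ε) ^ (2 * n) ≤ 2 * (2 * n) * (2 * R) ^ ((2 * n) - 1) * ε := by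
      have hg := geom_sum₂_mul (R + ε) (R - ε) (2 * n)
      have hterm : ∀ i ∈ Finset.range (2 * n), (R + ε) ^ i * (R - ε) ^ ((2 * n) - 1 - i) ≤
          (2 * R) ^ ((2 * n) - 1) := by
        intro i hi
        have hip : i + ((2 * n) - 1 - i) = (2 * n) - 1 := by
          have := Finset.mem_range.mp hi; omega
        calc (R + ε) ^ i * (R - ε) ^ ((2 * n) - 1 - i)
            ≤ (2 * R) ^ i * (2 * R) ^ ((2 * n) - 1 - i) := by
              apply mul_le_mul (pow_le_pow_left₀ (by linarith) (by linarith) i)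
                (pow_le_pow_left₀ (by linarith) (by linarith) _)
                (pow_nonneg (by linarith) _) (pow_nonneg (by linarith) _)
          _ = (2 * R) ^ ((2 * n) - 1) := by rw [← pow_add, hip]
      have hsum : (∑ i ∈ Finset.range (2 * n), (R + ε) ^ i * (R - ε) ^ ((2 * n) - 1 - i)) ≤
          (2 * n) * (2 * R) ^ ((2 * n) - 1) := by
        calc (∑ i ∈ Finset.range (2 * n), (R + ε) ^ i * (R - ε) ^ ((2 * n) - 1 - i))
            ≤ (Finset.range (2 * n)).card • (2 * R) ^ ((2 * n) - 1) := Finset.sum_le_card_nsmul _ _ _ hterm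
          _ = (2 * n) * (2 * R) ^ ((2 * n) - 1) := by rw [Finset.card_range, nsmul_eq_mul]; push_cast; ring
      have heps : (R + ε) - (R - ε) = 2 * ε := by ring
      rw [heps] at hg
      have hsum0 : 0 ≤ (2 * R) ^ ((2 * n) - 1) := pow_nonneg (by linarith) _
      nlinarith [hg, hsum, hε.le]
    calc (volume Ann).toReal = ((R + ε) ^ (2 * n) - (R - ε) ^ (2 * n)) * ω := htoReal
      _ ≤ (2 * (2 * n) * (2 * R) ^ ((2 * n) - 1) * ε) * ω := mul_le_mul_of_nonneg_right hgeom hω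
      _ = C₁ * ε := by rw [hC₁_def]; ring
  -- numeric endgame
  have hεa_pos : 0 < ε ^ a := Real.rpow_pos_of_pos hε a
  have hM1 : M ≤ ε ^ (a - 1) / (1 - a) := by
    have hpos : 0 < ε ^ (a - 1) := Real.rpow_pos_of_pos hε _
    have hlog := Real.log_le_sub_one_of_pos hpos
    rw [Real.log_rpow hε] at hlog
    apply max_le
    · rw [le_div_iff₀ h1a]; nlinarith
    · positivity
  have hM2 : Real.exp (-M) ≤ ε ^ a := by
    rcases le_or_gt ε 1 with hε1 | hε1
    · have h1 : Real.exp (-M) ≤ ε := by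
        have h2 : -M ≤ Real.log ε := by
          have h3 : -Real.log ε ≤ M := le_max_left _ _
          linarith
        calc Real.exp (-M) ≤ Real.exp (Real.log ε) := Real.exp_le_exp.2 h2
          _ = ε := Real.exp_log hε
      calc Real.exp (-M) ≤ ε := h1
        _ = ε ^ (1 : ℝ) := (Real.rpow_one ε).symm
        _ ≤ ε ^ a := Real.rpow_le_rpow_of_exponent_ge hε hε1 ha1.le
    · have h1 : Real.exp (-M) ≤ 1 := Real.exp_le_one_iff.2 (by linarith)
      have h2 : (1 : ℝ) ≤ ε ^ a := by
        have := Real.rpow_le_rpow (by norm_num) hε1.le ha0.le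
        rwa [Real.one_rpow] at this
      linarith
  have hεa1 : ε ^ (a - 1) * ε = ε ^ a := by
    calc ε ^ (a - 1) * ε = ε ^ (a - 1) * ε ^ (1 : ℝ) := by rw [Real.rpow_one]
      _ = ε ^ a := by rw [← Real.rpow_add hε]; norm_num
  have hKbound : K ≤ (2 * (C₁ / (1 - a) + A)) * ε ^ a := by
    have hv0 : 0 ≤ (volume Ann).toReal := ENNReal.toReal_nonneg
    have s1 : M * (volume Ann).toReal ≤ M * (C₁ * ε) := mul_le_mul_of_nonneg_left hAnnvol hM
    have s2 : M * (C₁ * ε) ≤ (ε ^ (a - 1) / (1 - a)) * (C₁ * ε) :=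
      mul_le_mul_of_nonneg_right hM1 (by positivity)
    have s3 : (ε ^ (a - 1) / (1 - a)) * (C₁ * ε) = (C₁ / (1 - a)) * ε ^ a := by
      field_simp
      nlinarith [hεa1]
    have s4 : Real.exp (-M) * A ≤ ε ^ a * A := mul_le_mul_of_nonneg_right hM2 hA
    rw [hK_def]
    nlinarith [s1, s2, s3, s4]
  rw [hmain]
  calc |∫ w, (Φ w - c) * h w| ≤ K := hbound
    _ ≤ (2 * (C₁ / (1 - a) + A)) * ε ^ a := hKbound
    _ ≤ (2 * (C₁ / (1 - a) + A) + 1) * ε ^ a := by nlinarith [hεa_pos]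
end

section
/- Let χ(t) := max{t, −1} for t ≤ 0, and let χ̃ : (−∞,0] → (−∞,0] be a convex, non-decreasing function with χ̃(0) = 0 and χ̃(−1) = −1 (so that χ̃ ≤ χ and χ̃(s) ≤ −1 for s ≤ −1). Then for every 0 < s ≤ 1, Q₀(s) := sup_{t ≤ −1} χ(s·t)/χ̃(t) = −1/χ̃(−1/s). Consequently, setting h(x) := (−χ̃(−x))^{1/2} for x ≥ 1 and Q(s) := (Q₀(s)/Q₀(1))^{1/2} for 0 < s < 1 with Q(s) := 1 for s ≥ 1, one has Q(s) = 1/h(1/s) for every 0 < s ≤ 1, and for every integer n ≥ 1 the n-fold iterate satisfies Q^{∘n}(s) = 1/h^{∘n}(1/s) for every 0 < s ≤ 1. -/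
open Set

private lemma aux_div_le_div {x y a b : ℝ} (ha : a < 0) (hb : b < 0) (h : x * b ≤ y * a) :
    x / a ≤ y / b := by
  rw [← neg_div_neg_eq x a, ← neg_div_neg_eq y b,
    div_le_div_iff₀ (by linarith) (by linarith)]
  nlinarith

/-- The explicit formula for `Q₀` and `Q` for the truncation weight `χ(t) = max{t,−1}`
(displays (4.4)–(4.5) of the paper): if `χ̃` is convex, non-decreasing with `χ̃(0) = 0`
and `χ̃(−1) = −1`, then `Q₀(s) = −1/χ̃(−1/s)` for `0 < s ≤ 1`; consequently, with
`h(x) := (−χ̃(−x))^{1/2}` and `Q(s) := (Q₀(s)/Q₀(1))^{1/2}` for `0 < s < 1` (and `Q(s) = 1`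
for `s ≥ 1`), one has `Q(s) = 1/h(1/s)` and `Q^{∘n}(s) = 1/h^{∘n}(1/s)` for `0 < s ≤ 1`. -/
theorem Q0_truncation_formula
    (χt : ℝ → ℝ) (hconv : ConvexOn ℝ (Set.Iic 0) χt)
    (hmono : MonotoneOn χt (Set.Iic 0)) (h0 : χt 0 = 0) (hm1 : χt (-1) = -1) :
    ∀ Q0 Q h : ℝ → ℝ,
      Q0 = (fun s => ⨆ t : Set.Iic (-1 : ℝ), max (s * (t : ℝ)) (-1) / χt (t : ℝ)) →
      h = (fun x => Real.sqrt (-χt (-x))) →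
      Q = (fun s => if 1 ≤ s then 1 else Real.sqrt (Q0 s / Q0 1)) →
      (∀ s : ℝ, 0 < s → s ≤ 1 → Q0 s = -1 / χt (-s⁻¹)) ∧
      (∀ s : ℝ, 0 < s → s ≤ 1 → Q s = 1 / h s⁻¹) ∧
      (∀ n : ℕ, 1 ≤ n → ∀ s : ℝ, 0 < s → s ≤ 1 → Q^[n] s = 1 / h^[n] s⁻¹) := by
  intro Q0 Q h hQ0def hhdef hQdef
  -- basic facts
  have hle : ∀ t : ℝ, t ≤ -1 → χt t ≤ -1 := by
    intro t ht
    have := hmono (show t ∈ Iic (0:ℝ) by simp; linarith) (show (-1:ℝ) ∈ Iic 0 by norm_num) ht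
    linarith [this, hm1.le, hm1.ge]
  have hcvx : ∀ u : ℝ, u ≤ 0 → ∀ l : ℝ, 0 ≤ l → l ≤ 1 → χt (l * u) ≤ l * χt u := by
    intro u hu l hl0 hl1
    have := hconv.2 (show u ∈ Iic (0:ℝ) from hu) (show (0:ℝ) ∈ Iic 0 by norm_num)
      hl0 (show (0:ℝ) ≤ 1 - l by linarith) (by ring)
    simp only [smul_eq_mul, mul_zero, add_zero, h0] at this
    linarith
  -- part 1
  have part1 : ∀ s : ℝ, 0 < s → s ≤ 1 → Q0 s = -1 / χt (-s⁻¹) := by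
    intro s hs hs1
    rw [hQ0def]
    have hsinv : (1:ℝ) ≤ s⁻¹ := by
      nlinarith [mul_inv_cancel₀ hs.ne', inv_pos.2 hs]
    have hmem : -s⁻¹ ≤ (-1:ℝ) := by linarith
    set c := χt (-s⁻¹) with hc
    have hcle : c ≤ -1 := hle _ hmem
    have hcneg : c < 0 := by linarith
    have hub : ∀ t : Iic (-1:ℝ), max (s * (t : ℝ)) (-1) / χt (t : ℝ) ≤ -1 / c := by
      rintro ⟨t, ht⟩
      simp only [Set.mem_Iic] at ht
      have hat : χt t ≤ -1 := hle t ht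
      have hatneg : χt t < 0 := by linarith
      rcases le_or_gt t (-s⁻¹) with hcase | hcase
      · -- max = -1
        have hst : s * t ≤ -1 := by
          have := mul_le_mul_of_nonneg_left hcase hs.le
          rw [mul_neg, mul_inv_cancel₀ hs.ne'] at this
          linarith
        rw [max_eq_right hst]
        have hac : χt t ≤ c := hmono (by simp; linarith) (by simp; linarith) hcase
        exact aux_div_le_div hatneg hcneg (by nlinarith)
      · -- max = s*t, use convexity with l = -s*t
        have hst : -1 ≤ s * t := by
          have := mul_le_mul_of_nonneg_left hcase.le hs.le
          rw [mul_neg, mul_inv_cancel₀ hs.ne'] at this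
          linarith
        rw [max_eq_left hst]
        have hl0 : 0 ≤ -(s*t) := by nlinarith
        have hl1 : -(s*t) ≤ 1 := by linarith
        have hkey : χt t ≤ -(s*t) * c := by
          have := hcvx (-s⁻¹) (by linarith) (-(s*t)) hl0 hl1
          have heq : -(s*t) * -s⁻¹ = t := by field_simp
          rwa [heq] at this
        exact aux_div_le_div hatneg hcneg (by nlinarith)
    haveI : Nonempty (Iic (-1:ℝ)) := ⟨⟨-1, by norm_num⟩⟩
    apply le_antisymm
    · exact ciSup_le hub
    · have hbdd : BddAbove (Set.range fun t : Iic (-1:ℝ) => max (s * (t : ℝ)) (-1) / χt (t : ℝ)) :=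
        ⟨-1 / c, by rintro x ⟨t, rfl⟩; exact hub t⟩
      have hthis := le_ciSup hbdd (⟨-s⁻¹, hmem⟩ : Iic (-1:ℝ))
      have heval : max (s * (-s⁻¹)) (-1) / χt (-s⁻¹) = -1 / c := by
        rw [mul_neg, mul_inv_cancel₀ hs.ne', max_self]
      rw [heval] at hthis
      exact hthis
  have hh1 : ∀ s : ℝ, 0 < s → s ≤ 1 → 1 ≤ h s⁻¹ := by
    intro s hs hs1
    have hsinv : (1:ℝ) ≤ s⁻¹ := by
      nlinarith [mul_inv_cancel₀ hs.ne', inv_pos.2 hs]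
    have hcle : χt (-s⁻¹) ≤ -1 := hle _ (by linarith)
    rw [hhdef]
    rw [show (1:ℝ) = Real.sqrt 1 by simp]
    exact Real.sqrt_le_sqrt (by linarith)
  -- part 2
  have part2 : ∀ s : ℝ, 0 < s → s ≤ 1 → Q s = 1 / h s⁻¹ := by
    intro s hs hs1
    have hsinv : (1:ℝ) ≤ s⁻¹ := by
      nlinarith [mul_inv_cancel₀ hs.ne', inv_pos.2 hs]
    have hcle : χt (-s⁻¹) ≤ -1 := hle _ (by linarith)
    have hpos : (0:ℝ) < -χt (-s⁻¹) := by linarith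
    rw [hQdef, hhdef]
    rcases eq_or_lt_of_le hs1 with heq | hlt
    · subst heq
      simp only [le_refl, if_true, inv_one]
      rw [hm1]
      norm_num
    · simp only [not_le.mpr hlt, if_false]
      rw [part1 s hs hs1, part1 1 one_pos le_rfl]
      simp only [inv_one, hm1]
      rw [show (-1:ℝ)/(-1) = 1 by norm_num, div_one]
      rw [show (-1:ℝ) / χt (-s⁻¹) = (-χt (-s⁻¹))⁻¹ by rw [inv_neg, neg_div, one_div]]
      rw [Real.sqrt_inv, one_div]
  refine ⟨part1, part2, ?_⟩
  -- part 3
  intro n hn1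
  clear hn1
  induction n with
  | zero => intro s hs hs1; simp
  | succ n ih =>
    intro s hs hs1
    have hh := hh1 s hs hs1
    have hhpos : (0:ℝ) < h s⁻¹ := by linarith
    have hQs : Q s = 1 / h s⁻¹ := part2 s hs hs1
    have hQpos : 0 < Q s := by rw [hQs]; positivity
    have hQle : Q s ≤ 1 := by
      rw [hQs, div_le_one hhpos]; exact hh
    have hQinv : (Q s)⁻¹ = h s⁻¹ := by rw [hQs, one_div, inv_inv]
    rw [Function.iterate_succ_apply, Function.iterate_succ_apply,
      ih (Q s) hQpos hQle, hQinv]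
end
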